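/- arXiv:2412.13992 — 8 statements merged into one kernel-verified Lean document; each statement's English description precedes it below -/
import Mathlib

section
/- Let 1 ≤ k ≤ r and suppose the index sequence j = (j_1,…,j_r) satisfies v_i = V_{i-1}(j_i,:) ≠ 0 for every i = 1,…,k. Then the r×k matrix M := Vᵀ E_{J_k} has invertible Gram matrix MᵀM, and the k-th iterate of the ARP recursion satisfies V_k = V (I_r − M (MᵀM)⁻¹ Mᵀ). (Since M has full column rank, M(MᵀM)⁻¹Mᵀ = M M† is the orthogonal projection onto the column space of M, so this is the identity V_k = V(I_r − VᵀE_{J_k}(VᵀE_{J_k})†) of Lemma 2.1.) -/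
open Matrix BigOperators

/-- One step of the ARP recursion: project out the `i`-th row of `W`
(convention: leave `W` unchanged if that row is zero). -/
noncomputable def arpStep {n r : ℕ} (W : Matrix (Fin n) (Fin r) ℝ) (i : Fin n) :
    Matrix (Fin n) (Fin r) ℝ :=
  if W i = 0 then W
  else W * (1 - (∑ l, (W i l) ^ 2)⁻¹ • Matrix.of fun a b => W i a * W i b)

/-- The ARP iterates `V_k`. -/
noncomputable def arpIter {n r : ℕ} (V : Matrix (Fin n) (Fin r) ℝ) (j : Fin r → Fin n) :
    ℕ → Matrix (Fin n) (Fin r) ℝ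
  | 0 => V
  | k + 1 => if h : k < r then arpStep (arpIter V j k) (j ⟨k, h⟩) else arpIter V j k

/-- The ARP weight `w(j) = ∏_{k=1}^r ‖v_k‖²/(r-k+1)`. -/
noncomputable def arpWeight {n r : ℕ} (V : Matrix (Fin n) (Fin r) ℝ) (j : Fin r → Fin n) : ℝ :=
  ∏ k : Fin r, (∑ l, (arpIter V j k.val (j k) l) ^ 2) / ((r : ℝ) - (k.val : ℝ))

/-- The matrix `E_J` whose `k`-th column is the `j_k`-th standard basis vector of ℝⁿ. -/
def EJ {n k : ℕ} (j : Fin k → Fin n) : Matrix (Fin n) (Fin k) ℝ :=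
  Matrix.of fun i l => if i = j l then 1 else 0

/-- Squared Frobenius norm. -/
def frobSq {m n : ℕ} (A : Matrix (Fin m) (Fin n) ℝ) : ℝ := ∑ i, ∑ j, (A i j) ^ 2

lemma myA_mul_vecMulVec {p q s : Type*} [Fintype q] (A : Matrix p q ℝ) (u : q → ℝ) (w : s → ℝ) :
    A * vecMulVec u w = vecMulVec (A.mulVec u) w := by
  ext a b
  simp only [Matrix.mul_apply, vecMulVec_apply, mulVec, dotProduct]
  rw [Finset.sum_mul]
  exact Finset.sum_congr rfl fun c _ => (mul_assoc _ _ _).symm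

lemma myvecMulVec_mul {p q s : Type*} [Fintype q] (u : p → ℝ) (w : q → ℝ) (B : Matrix q s ℝ) :
    vecMulVec u w * B = vecMulVec u (w ᵥ* B) := by
  ext a b
  simp only [Matrix.mul_apply, vecMulVec_apply, vecMul, dotProduct]
  rw [Finset.mul_sum]
  exact Finset.sum_congr rfl fun c _ => (mul_assoc _ _ _)

lemma myvecMulVec_mulVec {p q : Type*} [Fintype q] (u : p → ℝ) (w : q → ℝ) (x : q → ℝ) :
    (vecMulVec u w).mulVec x = (w ⬝ᵥ x) • u := by
  ext a
  simp only [mulVec, dotProduct, vecMulVec_apply, Pi.smul_apply, smul_eq_mul]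
  rw [Finset.sum_mul]
  exact Finset.sum_congr rfl fun c _ => by ring

lemma myvecMulVec_transpose {p q : Type*} (u : p → ℝ) (w : q → ℝ) :
    (vecMulVec u w)ᵀ = vecMulVec w u := by
  ext a b; simp [vecMulVec_apply, mul_comm]

lemma myEJ_mul {n r k : ℕ} (V : Matrix (Fin n) (Fin r) ℝ) (g : Fin k → Fin n) :
    Vᵀ * EJ g = Matrix.of fun a l => V (g l) a := by
  ext a l
  simp [Matrix.mul_apply, EJ, Matrix.transpose_apply]

lemma arp_aux {n r : ℕ} (V : Matrix (Fin n) (Fin r) ℝ) (j : Fin r → Fin n) :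
    ∀ (k : ℕ) (hkr : k ≤ r),
      (∀ i : Fin r, (i : ℕ) < k → arpIter V j i (j i) ≠ 0) →
      IsUnit (((Matrix.of fun (a : Fin r) (l : Fin k) => V (j (Fin.castLE hkr l)) a)ᵀ *
          (Matrix.of fun (a : Fin r) (l : Fin k) => V (j (Fin.castLE hkr l)) a)).det) ∧
        arpIter V j k =
          V * (1 - (Matrix.of fun (a : Fin r) (l : Fin k) => V (j (Fin.castLE hkr l)) a) *
            ((Matrix.of fun (a : Fin r) (l : Fin k) => V (j (Fin.castLE hkr l)) a)ᵀ *
              (Matrix.of fun (a : Fin r) (l : Fin k) => V (j (Fin.castLE hkr l)) a))⁻¹ *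
            (Matrix.of fun (a : Fin r) (l : Fin k) => V (j (Fin.castLE hkr l)) a)ᵀ) := by
  intro k
  induction k with
  | zero =>
      intro hkr _
      constructor
      · simp [Matrix.det_fin_zero]
      · have hz : (Matrix.of fun (a : Fin r) (l : Fin 0) => V (j (Fin.castLE hkr l)) a) *
            ((Matrix.of fun (a : Fin r) (l : Fin 0) => V (j (Fin.castLE hkr l)) a)ᵀ *
              (Matrix.of fun (a : Fin r) (l : Fin 0) => V (j (Fin.castLE hkr l)) a))⁻¹ *
            (Matrix.of fun (a : Fin r) (l : Fin 0) => V (j (Fin.castLE hkr l)) a)ᵀ = 0 := by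
          ext a b
          simp [Matrix.mul_apply]
        rw [hz, sub_zero, Matrix.mul_one]
        rfl
  | succ k IH =>
      intro hkr hnz
      have hk : k < r := Nat.lt_of_lt_of_le (Nat.lt_succ_self k) hkr
      have hkr0 : k ≤ r := Nat.le_of_lt hk
      obtain ⟨hGdet, hW⟩ := IH hkr0 (fun i hi => hnz i (Nat.lt_succ_of_lt hi))
      set M : Matrix (Fin r) (Fin k) ℝ :=
        Matrix.of fun (a : Fin r) (l : Fin k) => V (j (Fin.castLE hkr0 l)) a with hMdef
      set G : Matrix (Fin k) (Fin k) ℝ := Mᵀ * M with hGdef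
      set P : Matrix (Fin r) (Fin r) ℝ := M * G⁻¹ * Mᵀ with hPdef
      set M' : Matrix (Fin r) (Fin (k+1)) ℝ :=
        Matrix.of fun (a : Fin r) (l : Fin (k+1)) => V (j (Fin.castLE hkr l)) a with hM'def
      -- basic facts about P
      have hGsym : Gᵀ = G := by rw [hGdef, Matrix.transpose_mul, Matrix.transpose_transpose]
      have hGinv : G⁻¹ * G = 1 := Matrix.nonsing_inv_mul G hGdet
      have hGinvT : G⁻¹ᵀ = G⁻¹ := by rw [Matrix.transpose_nonsing_inv, hGsym]
      have hPsym : Pᵀ = P := by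
        rw [hPdef, Matrix.transpose_mul, Matrix.transpose_mul, Matrix.transpose_transpose,
          hGinvT, ← Matrix.mul_assoc]
      have hPM : P * M = M := by
        rw [hPdef, Matrix.mul_assoc (M * G⁻¹), ← hGdef, Matrix.mul_assoc, hGinv, Matrix.mul_one]
      have hPP : P * P = P := by
        nth_rewrite 2 [hPdef]
        rw [← Matrix.mul_assoc, ← Matrix.mul_assoc, hPM, ← hPdef]
      have hP'P : (1 - P) * P = 0 := by rw [sub_mul, one_mul, hPP, sub_self]
      have hP'M : (1 - P) * M = 0 := by rw [Matrix.sub_mul, Matrix.one_mul, hPM, sub_self]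
      -- the new row / vector data
      set i : Fin r := ⟨k, hk⟩ with hidef
      set W : Matrix (Fin n) (Fin r) ℝ := arpIter V j k with hWdef
      set m : Fin r → ℝ := fun a => V (j i) a with hmdef
      set q : Fin r → ℝ := m ᵥ* (1 - P) with hqdef
      have hqW : W (j i) = q := by
        funext a
        rw [hW]
        simp [Matrix.mul_apply, hqdef, Matrix.vecMul, dotProduct, hmdef]
      have hqne : q ≠ 0 := by
        rw [← hqW]
        exact hnz ⟨k, hk⟩ (Nat.lt_succ_self k)
      set s : ℝ := q ⬝ᵥ q with hsdef
      have hs0 : s ≠ 0 := by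
        intro h
        rw [hsdef] at h
        exact hqne (dotProduct_self_eq_zero.1 h)
      have hqm : q = (1 - P) *ᵥ m := by
        rw [hqdef, ← Matrix.vecMul_transpose, Matrix.transpose_sub, Matrix.transpose_one, hPsym]
      have hqMzero : q ᵥ* M = 0 := by
        rw [hqdef, Matrix.vecMul_vecMul, hP'M, Matrix.vecMul_zero]
      have hqPzero : q ᵥ* P = 0 := by
        rw [hqdef, Matrix.vecMul_vecMul, hP'P, Matrix.vecMul_zero]
      have hPq : P *ᵥ q = 0 := by
        rw [hqm, Matrix.mulVec_mulVec, mul_sub, mul_one, hPP, sub_self, Matrix.zero_mulVec]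
      have hm' : m = q + P *ᵥ m := by
        rw [hqm, Matrix.sub_mulVec, Matrix.one_mulVec]
        abel
      have hqdotm : q ⬝ᵥ m = s := by
        calc q ⬝ᵥ m = q ⬝ᵥ (q + P *ᵥ m) := by rw [← hm']
        _ = q ⬝ᵥ q + q ⬝ᵥ (P *ᵥ m) := dotProduct_add _ _ _
        _ = s := by rw [Matrix.dotProduct_mulVec, hqPzero, zero_dotProduct, add_zero, hsdef]
      -- structural relations between M' and M, m
      set J : Matrix (Fin (k+1)) (Fin k) ℝ :=
        Matrix.of fun l' l => if l' = Fin.castSucc l then 1 else 0 with hJdef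
      have hMJ : M' * J = M := by
        ext a l
        simp only [Matrix.mul_apply, hJdef, Matrix.of_apply, mul_ite, mul_one, mul_zero]
        rw [Finset.sum_ite_eq' Finset.univ (Fin.castSucc l) (fun l' => M' a l')]
        simp only [Finset.mem_univ, if_true]
        rfl
      have hmM' : m = M' *ᵥ Pi.single (Fin.last k) 1 := by
        funext a
        simp only [Matrix.mulVec, dotProduct, Pi.single_apply, mul_ite, mul_one, mul_zero]
        rw [Finset.sum_ite_eq' Finset.univ (Fin.last k) (fun l' => M' a l')]
        simp only [Finset.mem_univ, if_true]
        rfl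
      set X : Matrix (Fin (k+1)) (Fin r) ℝ := J * G⁻¹ * Mᵀ with hXdef
      have hPX : M' * X = P := by
        rw [hXdef, hPdef, ← Matrix.mul_assoc, ← Matrix.mul_assoc, hMJ]
      set w : Fin (k+1) → ℝ := Pi.single (Fin.last k) 1 - X *ᵥ m with hwdef
      have hqM' : q = M' *ᵥ w := by
        rw [hwdef, Matrix.mulVec_sub, Matrix.mulVec_mulVec, hPX, ← hmM', hqm, Matrix.sub_mulVec,
          Matrix.one_mulVec]
      -- the updated projector
      set Q : Matrix (Fin r) (Fin r) ℝ := P + s⁻¹ • vecMulVec q q with hQdef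
      have hQsym : Qᵀ = Q := by
        rw [hQdef, Matrix.transpose_add, hPsym, Matrix.transpose_smul, myvecMulVec_transpose]
      have hQM : Q * M = M := by
        rw [hQdef, Matrix.add_mul, hPM, Matrix.smul_mul, myvecMulVec_mul, hqMzero]
        have : vecMulVec q (0 : Fin k → ℝ) = 0 := by ext a b; simp [vecMulVec_apply]
        rw [this, smul_zero, add_zero]
      have hQm : Q *ᵥ m = m := by
        rw [hQdef, Matrix.add_mulVec, Matrix.smul_mulVec, myvecMulVec_mulVec, hqdotm,
          smul_smul, inv_mul_cancel₀ hs0, one_smul]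
        nth_rewrite 2 [hm']
        abel
      set D : Matrix (Fin (k+1)) (Fin r) ℝ := X + s⁻¹ • vecMulVec w q with hDdef
      have hQMD : Q = M' * D := by
        rw [hDdef, Matrix.mul_add, hPX, Matrix.mul_smul, myA_mul_vecMulVec, ← hqM', hQdef]
      have hQM' : Q * M' = M' := by
        have e1 : ∀ (a : Fin r) (l0 : Fin k), (Q * M') a (Fin.castSucc l0) = (Q * M) a l0 :=
          fun a l0 => rfl
        have e2 : ∀ a : Fin r, (Q * M') a (Fin.last k) = (Q *ᵥ m) a := fun a => rfl
        ext a l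
        refine Fin.lastCases ?_ ?_ l
        · rw [e2 a, hQm]
          rfl
        · intro l0
          rw [e1 a l0, hQM]
          rfl
      -- invertibility of the new Gram matrix
      have hG'det : IsUnit (M'ᵀ * M').det := by
        rw [isUnit_iff_ne_zero]
        intro hdet0
        obtain ⟨x, hx0, hx⟩ := (Matrix.exists_mulVec_eq_zero_iff).2 hdet0
        have hMx : M' *ᵥ x = 0 := by
          have h1 : (M' *ᵥ x) ⬝ᵥ (M' *ᵥ x) = 0 := by
            calc (M' *ᵥ x) ⬝ᵥ (M' *ᵥ x) = (x ᵥ* M'ᵀ) ⬝ᵥ (M' *ᵥ x) := by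
                  rw [Matrix.vecMul_transpose]
            _ = x ⬝ᵥ ((M'ᵀ * M') *ᵥ x) := by
                  rw [← Matrix.dotProduct_mulVec, Matrix.mulVec_mulVec]
            _ = 0 := by rw [hx, dotProduct_zero]
          exact dotProduct_self_eq_zero.1 h1
        have hxlast : x (Fin.last k) = 0 := by
          have h2 : (q ᵥ* M') ⬝ᵥ x = 0 := by
            rw [← Matrix.dotProduct_mulVec, hMx, dotProduct_zero]
          have hcol : ∀ l0 : Fin k, (q ᵥ* M') (Fin.castSucc l0) = 0 := by
            intro l0
            have : (q ᵥ* M') (Fin.castSucc l0) = (q ᵥ* M) l0 := rfl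
            rw [this, hqMzero]
            rfl
          have hlast : (q ᵥ* M') (Fin.last k) = s := hqdotm
          have h3 : (q ᵥ* M') ⬝ᵥ x = s * x (Fin.last k) := by
            calc (q ᵥ* M') ⬝ᵥ x = ∑ l', (q ᵥ* M') l' * x l' := rfl
            _ = (∑ l0 : Fin k, (q ᵥ* M') (Fin.castSucc l0) * x (Fin.castSucc l0)) +
                (q ᵥ* M') (Fin.last k) * x (Fin.last k) := Fin.sum_univ_castSucc _
            _ = s * x (Fin.last k) := by
                rw [hlast]
                simp [hcol]
          rw [h3] at h2
          exact (mul_eq_zero.1 h2).resolve_left hs0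
        have hy : (fun l0 : Fin k => x (Fin.castSucc l0)) = 0 := by
          set y : Fin k → ℝ := fun l0 => x (Fin.castSucc l0) with hydef
          have hMy : M *ᵥ y = 0 := by
            funext a
            have h4 : (M' *ᵥ x) a = (M *ᵥ y) a + m a * x (Fin.last k) := by
              show ∑ l', M' a l' * x l' = _
              rw [Fin.sum_univ_castSucc]
              rfl
            have h5 := congrFun hMx a
            rw [h4, hxlast, mul_zero, add_zero] at h5
            exact h5
          have hGy : G *ᵥ y = 0 := by
            rw [hGdef, ← Matrix.mulVec_mulVec, hMy, Matrix.mulVec_zero]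
          have h6 := congrArg (fun v => G⁻¹ *ᵥ v) hGy
          simpa [Matrix.mulVec_mulVec, hGinv, Matrix.one_mulVec, Matrix.mulVec_zero] using h6
        refine hx0 (funext fun l' => ?_)
        refine Fin.lastCases ?_ ?_ l'
        · exact hxlast
        · intro l0
          exact congrFun hy l0
      -- the projector formula for M'
      have hG'inv : (M'ᵀ * M')⁻¹ * (M'ᵀ * M') = 1 := Matrix.nonsing_inv_mul _ hG'det
      have hM'tQ : M'ᵀ * Q = M'ᵀ := by
        have h7 := congrArg Matrix.transpose hQM'
        rwa [Matrix.transpose_mul, hQsym] at h7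
      have hQeq : M' * (M'ᵀ * M')⁻¹ * M'ᵀ = Q := by
        calc M' * (M'ᵀ * M')⁻¹ * M'ᵀ = M' * (M'ᵀ * M')⁻¹ * (M'ᵀ * Q) := by
              rw [hM'tQ]
        _ = M' * (M'ᵀ * M')⁻¹ * (M'ᵀ * (M' * D)) := by rw [← hQMD]
        _ = M' * ((M'ᵀ * M')⁻¹ * (M'ᵀ * M')) * D := by simp only [Matrix.mul_assoc]
        _ = M' * D := by rw [hG'inv, Matrix.mul_one]
        _ = Q := hQMD.symm
      -- compute the iterate
      have hiter : arpIter V j (k+1) = arpStep W (j i) := by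
        show (if h : k < r then arpStep (arpIter V j k) (j ⟨k, h⟩) else arpIter V j k) = _
        rw [dif_pos hk]
      have hstep : arpStep W (j i) = W * (1 - s⁻¹ • vecMulVec q q) := by
        rw [arpStep, if_neg (by rw [hqW]; exact hqne)]
        rw [hqW]
        have hsum : (∑ l, q l ^ 2) = s := by
          rw [hsdef]
          simp [dotProduct, sq]
        have hof : (Matrix.of fun a b => q a * q b) = vecMulVec q q := rfl
        rw [hsum, hof]
      have hPN : P * vecMulVec q q = 0 := by
        rw [myA_mul_vecMulVec, hPq]
        ext a b
        simp [vecMulVec_apply]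
      have hfinal : arpIter V j (k+1) = V * (1 - Q) := by
        rw [hiter, hstep, hW, Matrix.mul_assoc]
        congr 1
        rw [mul_sub, mul_one, Matrix.mul_smul, sub_mul, one_mul, hPN, sub_zero, hQdef, ← sub_sub]
      exact ⟨hG'det, by rw [hfinal, hQeq]⟩

/-- For `1 ≤ k ≤ r`, if all rows selected in the first `k` ARP steps are
nonzero, then `M := Vᵀ E_{J_k}` has invertible Gram matrix `MᵀM` and
`V_k = V (I − M (MᵀM)⁻¹ Mᵀ)`. -/
theorem arp_iterate_formula {n r : ℕ} (hn : 0 < n) (hr : 0 < r) (hrn : r ≤ n)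
    (V : Matrix (Fin n) (Fin r) ℝ) (hV : Vᵀ * V = 1)
    (j : Fin r → Fin n) (k : ℕ) (hk1 : 1 ≤ k) (hkr : k ≤ r)
    (hnz : ∀ i : Fin r, (i : ℕ) < k → arpIter V j i (j i) ≠ 0) :
    IsUnit ((Vᵀ * EJ (fun l : Fin k => j (Fin.castLE hkr l)))ᵀ *
        (Vᵀ * EJ (fun l : Fin k => j (Fin.castLE hkr l)))).det ∧
      arpIter V j k =
        V * (1 - (Vᵀ * EJ (fun l : Fin k => j (Fin.castLE hkr l))) *
          ((Vᵀ * EJ (fun l : Fin k => j (Fin.castLE hkr l)))ᵀ *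
            (Vᵀ * EJ (fun l : Fin k => j (Fin.castLE hkr l))))⁻¹ *
          (Vᵀ * EJ (fun l : Fin k => j (Fin.castLE hkr l)))ᵀ) := by
  rw [myEJ_mul V (fun l : Fin k => j (Fin.castLE hkr l))]
  exact arp_aux V j k hkr hnz
end

section
/- Let 0 ≤ k ≤ r and suppose the index sequence j = (j_1,…,j_r) satisfies v_i = V_{i-1}(j_i,:) ≠ 0 for every i = 1,…,k. Then the k-th iterate of the ARP recursion satisfies ‖V_k‖_F² = r − k. In particular, the quantities ‖V_k(j,:)‖₂²/(r−k) for j = 1,…,n sum to 1 when k < r. -/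
open Matrix BigOperators

/-!
Write `G_k = V_kᵀ V_k` and `P_v = vvᵀ / vᵀv` for the projection onto the line of `v`.
The invariant `V_k G_k = V_k` says that every row of `V_k` is fixed by `G_k`, so for the
selected row `v` we get `G_k P_v = P_v G_k = P_v`; hence `G_{k+1} = (1 - P_v) G_k (1 - P_v)`
equals `G_k - P_v`, the invariant persists, and each step with `v ≠ 0` lowers
`‖V_k‖_F² = tr G_k` by `tr P_v = 1`, starting from `tr G_0 = tr I_r = r`.
-/

section LineProj

variable {m 𝕜 : Type*} [Fintype m] [Field 𝕜]

-- The junk value `0⁻¹ = 0` makes `lineProj 0 = 0`, matching `arpStep`'s convention for zero rows.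
noncomputable def lineProj (v : m → 𝕜) : Matrix m m 𝕜 :=
  (v ⬝ᵥ v)⁻¹ • vecMulVec v v

@[simp]
theorem lineProj_zero : lineProj (0 : m → 𝕜) = 0 := by
  simp [lineProj]

theorem transpose_lineProj (v : m → 𝕜) : (lineProj v)ᵀ = lineProj v := by
  simp [lineProj]

theorem lineProj_mul_self (v : m → 𝕜) : lineProj v * lineProj v = lineProj v := by
  simp only [lineProj, smul_mul_smul_comm, vecMulVec_mul_vecMulVec, vecMulVec_smul, smul_smul]
  congr 1
  rw [mul_assoc, mul_comm (v ⬝ᵥ v)⁻¹ (v ⬝ᵥ v), ← mul_assoc]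
  simpa only [inv_inv] using mul_inv_mul_cancel (v ⬝ᵥ v)⁻¹

theorem lineProj_mul_of_vecMul_eq {v : m → 𝕜} {G : Matrix m m 𝕜} (h : v ᵥ* G = v) :
    lineProj v * G = lineProj v := by
  rw [lineProj, smul_mul_assoc, vecMulVec_mul, h]

theorem mul_lineProj_of_mulVec_eq {v : m → 𝕜} {G : Matrix m m 𝕜} (h : G *ᵥ v = v) :
    G * lineProj v = lineProj v := by
  rw [lineProj, mul_smul_comm, mul_vecMulVec, h]

theorem trace_lineProj {v : m → 𝕜} (hv : v ⬝ᵥ v ≠ 0) : (lineProj v).trace = 1 := by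
  rw [lineProj, trace_smul, trace_vecMulVec, smul_eq_mul, inv_mul_cancel₀ hv]

end LineProj

theorem frobSq_eq_trace {m n : ℕ} (A : Matrix (Fin m) (Fin n) ℝ) :
    frobSq A = (Aᵀ * A).trace := by
  simp only [frobSq, trace, diag, mul_apply, transpose_apply, sq]
  exact Finset.sum_comm

section ArpStep

variable {n r : ℕ} {W : Matrix (Fin n) (Fin r) ℝ}

theorem arpStep_eq_mul_lineProj (W : Matrix (Fin n) (Fin r) ℝ) (i : Fin n) :
    arpStep W i = W * (1 - lineProj (W i)) := by
  by_cases hi : W i = 0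
  · simp [arpStep, hi]
  · simp only [arpStep, if_neg hi, lineProj, dotProduct, sq]
    rfl

theorem lineProj_row_mul_gram (hW : W * (Wᵀ * W) = W) (i : Fin n) :
    lineProj (W i) * (Wᵀ * W) = lineProj (W i) :=
  lineProj_mul_of_vecMul_eq (by rw [← mul_apply_eq_vecMul, hW])

theorem gram_mul_lineProj_row (hW : W * (Wᵀ * W) = W) (i : Fin n) :
    Wᵀ * W * lineProj (W i) = lineProj (W i) :=
  mul_lineProj_of_mulVec_eq <| by
    rw [← vecMul_transpose, transpose_mul, transpose_transpose, ← mul_apply_eq_vecMul, hW]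

theorem gram_arpStep (hW : W * (Wᵀ * W) = W) (i : Fin n) :
    (arpStep W i)ᵀ * arpStep W i = Wᵀ * W - lineProj (W i) := by
  rw [arpStep_eq_mul_lineProj, transpose_mul, transpose_sub, transpose_one, transpose_lineProj,
    Matrix.mul_assoc, ← Matrix.mul_assoc Wᵀ]
  simp only [Matrix.sub_mul, Matrix.mul_sub, Matrix.one_mul, Matrix.mul_one,
    lineProj_row_mul_gram hW, gram_mul_lineProj_row hW, lineProj_mul_self]
  abel

theorem arpStep_mul_gram (hW : W * (Wᵀ * W) = W) (i : Fin n) :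
    arpStep W i * ((arpStep W i)ᵀ * arpStep W i) = arpStep W i := by
  have hfix : (1 - lineProj (W i)) * (Wᵀ * W - lineProj (W i)) = Wᵀ * W - lineProj (W i) := by
    simp only [Matrix.sub_mul, Matrix.mul_sub, Matrix.one_mul, lineProj_row_mul_gram hW,
      lineProj_mul_self, sub_self, sub_zero]
  rw [gram_arpStep hW, arpStep_eq_mul_lineProj, Matrix.mul_assoc, hfix, Matrix.mul_sub, hW,
    Matrix.mul_sub, Matrix.mul_one]

theorem frobSq_arpStep (hW : W * (Wᵀ * W) = W) {i : Fin n} (hi : W i ≠ 0) :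
    frobSq (arpStep W i) = frobSq W - 1 := by
  rw [frobSq_eq_trace, frobSq_eq_trace, gram_arpStep hW, trace_sub,
    trace_lineProj (fun h => hi (dotProduct_self_eq_zero.mp h))]

end ArpStep

section ArpIter

variable {n r : ℕ} {V : Matrix (Fin n) (Fin r) ℝ} (j : Fin r → Fin n)

theorem arpIter_succ_of_lt {k : ℕ} (hk : k < r) :
    arpIter V j (k + 1) = arpStep (arpIter V j k) (j ⟨k, hk⟩) := by
  rw [arpIter, dif_pos hk]

theorem arpIter_mul_gram (hV : Vᵀ * V = 1) (k : ℕ) :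
    arpIter V j k * ((arpIter V j k)ᵀ * arpIter V j k) = arpIter V j k := by
  induction k with
  | zero => rw [arpIter, hV, Matrix.mul_one]
  | succ k ih =>
    by_cases hk : k < r
    · rw [arpIter_succ_of_lt j hk]
      exact arpStep_mul_gram ih _
    · rwa [arpIter, dif_neg hk]

theorem frobSq_arpIter (hV : Vᵀ * V = 1) {k : ℕ} (hkr : k ≤ r)
    (hnz : ∀ i : Fin r, (i : ℕ) < k → arpIter V j i (j i) ≠ 0) :
    frobSq (arpIter V j k) = (r : ℝ) - (k : ℝ) := by
  induction k with
  | zero => simp [arpIter, frobSq_eq_trace, hV]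
  | succ k ih =>
    have hk : k < r := hkr
    rw [arpIter_succ_of_lt j hk,
      frobSq_arpStep (arpIter_mul_gram j hV k) (hnz ⟨k, hk⟩ k.lt_succ_self),
      ih hk.le fun i hi => hnz i (hi.trans k.lt_succ_self)]
    push_cast
    ring

end ArpIter

theorem arp_iterate_frobSq_general {n r : ℕ}
    (V : Matrix (Fin n) (Fin r) ℝ) (hV : Vᵀ * V = 1)
    (j : Fin r → Fin n) (k : ℕ) (hkr : k ≤ r)
    (hnz : ∀ i : Fin r, (i : ℕ) < k → arpIter V j i (j i) ≠ 0) :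
    frobSq (arpIter V j k) = (r : ℝ) - (k : ℝ) ∧
      (k < r → ∑ i : Fin n, (∑ l, (arpIter V j k i l) ^ 2) / ((r : ℝ) - (k : ℝ)) = 1) := by
  have hfrob := frobSq_arpIter j hV hkr hnz
  refine ⟨hfrob, fun hk => ?_⟩
  have hpos : (0 : ℝ) < r - k := sub_pos.mpr (by exact_mod_cast hk)
  rw [← Finset.sum_div, ← frobSq, hfrob, div_self hpos.ne']

/-- For `0 ≤ k ≤ r`, if all rows selected in the first `k` ARP steps are
nonzero, then `‖V_k‖_F² = r − k`; in particular the numbers `‖V_k(j,:)‖₂²/(r−k)` sum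
to `1` when `k < r`. -/
theorem arp_iterate_frobSq {n r : ℕ} (hn : 0 < n) (hr : 0 < r) (hrn : r ≤ n)
    (V : Matrix (Fin n) (Fin r) ℝ) (hV : Vᵀ * V = 1)
    (j : Fin r → Fin n) (k : ℕ) (hkr : k ≤ r)
    (hnz : ∀ i : Fin r, (i : ℕ) < k → arpIter V j i (j i) ≠ 0) :
    frobSq (arpIter V j k) = (r : ℝ) - (k : ℝ) ∧
      (k < r → ∑ i : Fin n, (∑ l, (arpIter V j k i l) ^ 2) / ((r : ℝ) - (k : ℝ)) = 1) :=
  arp_iterate_frobSq_general V hV j k hkr hnz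
end

section
/- Let 1 ≤ k ≤ r and suppose the index sequence j = (j_1,…,j_r) satisfies v_i = V_{i-1}(j_i,:) ≠ 0 for every i = 1,…,k. Define the oblique projectors Π̃_i := I_n − e_{j_i} (v_i V_{i-1}ᵀ)/‖v_i‖₂² for i = 1,…,k, where e_{j_i} ∈ ℝⁿ is the j_i-th standard basis column vector. Then the k×k matrix E_{J_k}ᵀ V Vᵀ E_{J_k} is invertible and Π̃_1 Π̃_2 ⋯ Π̃_k = I_n − E_{J_k} (E_{J_k}ᵀ V Vᵀ E_{J_k})⁻¹ E_{J_k}ᵀ V Vᵀ. (Since M := VᵀE_{J_k} has full column rank, the right-hand side equals I_n − E_{J_k}(VᵀE_{J_k})† Vᵀ, which is the product formula of Lemma 2.2.) -/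
open Matrix BigOperators

/-!
Write `Π^P_E = E (Eᵀ P E)⁻¹ Eᵀ P` and `P = V Vᵀ`. Appending columns `c` to `E` factors the
complementary projector through the Schur complement of `Eᵀ P E`:
`1 - Π^P_[E c] = (1 - Π^P_E) (1 - Π^Q_c)` with `Q = P (1 - Π^P_E)`.
One ARP step multiplies `V_k V_kᵀ` on the right by `Π̃_{k+1} = 1 - Π^{V_k V_kᵀ}_{e_{j_{k+1}}}`, so
`V_k V_kᵀ = P Π̃_1 ⋯ Π̃_k`; by induction this is `P (1 - Π^P_{E_{J_k}})`, and the Schur complement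
needed at the next step is `e_{j_{k+1}}ᵀ V_k V_kᵀ e_{j_{k+1}} = ‖v_{k+1}‖² ≠ 0`.
-/

section ObliqueProjection

variable {K ι m o : Type*} [Field K] [Fintype ι]

theorem transpose_mul_mul_submatrix_equiv {m' : Type*} (P : Matrix ι ι K) (E : Matrix ι m K)
    (e : m' ≃ m) :
    (E.submatrix id e)ᵀ * P * E.submatrix id e = (Eᵀ * P * E).submatrix e e := by
  ext; simp [mul_apply]

variable [Fintype m] [DecidableEq m]

/-- The oblique projector onto the column space of `E` along the kernel of `Eᵀ P`. -/
noncomputable def obliqueProj (P : Matrix ι ι K) (E : Matrix ι m K) : Matrix ι ι K :=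
  E * (Eᵀ * P * E)⁻¹ * (Eᵀ * P)

theorem obliqueProj_submatrix_equiv {m' : Type*} [Fintype m'] [DecidableEq m']
    (P : Matrix ι ι K) (E : Matrix ι m K) (e : m' ≃ m) :
    obliqueProj P (E.submatrix id e) = obliqueProj P E := by
  have hEP : (E.submatrix id e)ᵀ * P = (Eᵀ * P).submatrix e id := by
    ext; simp [mul_apply]
  rw [obliqueProj, transpose_mul_mul_submatrix_equiv, hEP, inv_submatrix_equiv,
    submatrix_mul_equiv, submatrix_mul_equiv, submatrix_id_id, obliqueProj]

variable [DecidableEq ι]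

theorem transpose_mul_mul_one_sub_obliqueProj (P : Matrix ι ι K) (E : Matrix ι m K)
    (c : Matrix ι o K) :
    cᵀ * (P * (1 - obliqueProj P E)) * c =
      cᵀ * P * c - cᵀ * P * E * (Eᵀ * P * E)⁻¹ * (Eᵀ * P * c) := by
  simp only [obliqueProj, Matrix.mul_sub, Matrix.sub_mul, Matrix.mul_one, Matrix.mul_assoc]

theorem one_sub_obliqueProj_fromCols [Fintype o] [DecidableEq o] {P : Matrix ι ι K}
    {E : Matrix ι m K} {c : Matrix ι o K} (hE : IsUnit (Eᵀ * P * E).det)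
    (hc : IsUnit (cᵀ * (P * (1 - obliqueProj P E)) * c).det) :
    IsUnit ((fromCols E c)ᵀ * P * fromCols E c).det ∧
      1 - obliqueProj P (fromCols E c) =
        (1 - obliqueProj P E) * (1 - obliqueProj (P * (1 - obliqueProj P E)) c) := by
  set G := Eᵀ * P * E with hG
  set S := cᵀ * (P * (1 - obliqueProj P E)) * c with hS
  have hGram : (fromCols E c)ᵀ * P * fromCols E c =
      fromBlocks G (Eᵀ * P * c) (cᵀ * P * E) (cᵀ * P * c) := by
    rw [transpose_fromCols, fromRows_mul, fromRows_mul_fromCols]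
  have hSchur : cᵀ * P * c - cᵀ * P * E * G⁻¹ * (Eᵀ * P * c) = S := by
    rw [hS, transpose_mul_mul_one_sub_obliqueProj]
  let := G.invertibleOfIsUnitDet hE
  let := Matrix.invertibleOfIsUnitDet _ (by rwa [invOf_eq_nonsing_inv, hSchur] :
    IsUnit (cᵀ * P * c - cᵀ * P * E * ⅟G * (Eᵀ * P * c)).det)
  let := fromBlocks₁₁Invertible G (Eᵀ * P * c) (cᵀ * P * E) (cᵀ * P * c)
  refine ⟨hGram ▸ isUnit_det_of_invertible _, ?_⟩
  have hinv := invOf_fromBlocks₁₁_eq G (Eᵀ * P * c) (cᵀ * P * E) (cᵀ * P * c)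
  simp only [invOf_eq_nonsing_inv, hSchur, ← hGram] at hinv
  rw [obliqueProj.eq_1 (P * (1 - obliqueProj P E)) c, ← hS, obliqueProj, hinv, transpose_fromCols,
    fromRows_mul, fromCols_mul_fromBlocks, fromCols_mul_fromRows, obliqueProj, ← hG]
  simp only [Matrix.mul_sub, Matrix.sub_mul, Matrix.mul_add, Matrix.add_mul, Matrix.mul_one,
    Matrix.one_mul, Matrix.neg_mul, Matrix.mul_neg, Matrix.mul_assoc]
  abel

end ObliqueProjection

section SelectionMatrix

variable {n : ℕ}

theorem EJ_submatrix_finSumFinEquiv {m : ℕ} (f : Fin (m + 1) → Fin n) :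
    (EJ f).submatrix id finSumFinEquiv =
      fromCols (EJ fun l : Fin m => f l.castSucc) (EJ fun _ : Fin 1 => f (Fin.last m)) := by
  ext a (l | l)
  · rfl
  · obtain rfl : l = 0 := Subsingleton.elim l 0
    rfl

theorem det_EJ_single_transpose_mul_mul (M : Matrix (Fin n) (Fin n) ℝ) (t : Fin n) :
    ((EJ fun _ : Fin 1 => t)ᵀ * M * EJ fun _ : Fin 1 => t).det = M t t := by
  simp [EJ, mul_apply]

theorem obliqueProj_EJ_single (P : Matrix (Fin n) (Fin n) ℝ) (t : Fin n) :
    obliqueProj P (EJ fun _ : Fin 1 => t) = (P t t)⁻¹ • vecMulVec (Pi.single t 1) (P t) := by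
  ext a b
  simp [obliqueProj, EJ, mul_apply, vecMulVec_apply, Pi.single_apply]

end SelectionMatrix

section ARP

variable {n r : ℕ}

theorem arpStep_eq (W : Matrix (Fin n) (Fin r) ℝ) (t : Fin n) :
    arpStep W t = W * (1 - (W t ⬝ᵥ W t)⁻¹ • vecMulVec (W t) (W t)) := by
  unfold arpStep
  split_ifs with h
  · simp [h]
  · simp [dotProduct, sq, vecMulVec]

theorem isIdempotentElem_inv_dotProduct_smul_vecMulVec {K ι : Type*} [Field K] [Fintype ι]
    (w : ι → K) :
    IsIdempotentElem ((w ⬝ᵥ w)⁻¹ • vecMulVec w w) := by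
  rw [IsIdempotentElem, Matrix.smul_mul, Matrix.mul_smul, vecMulVec_mul_vecMulVec, smul_smul,
    vecMulVec_smul, smul_smul]
  rcases eq_or_ne (w ⬝ᵥ w) 0 with h | h <;> simp [h]

theorem arpStep_mul_transpose (W : Matrix (Fin n) (Fin r) ℝ) (t : Fin n) :
    arpStep W t * (arpStep W t)ᵀ =
      W * Wᵀ * (1 - obliqueProj (W * Wᵀ) (EJ fun _ : Fin 1 => t)) := by
  have hdiag : (W * Wᵀ) t t = W t ⬝ᵥ W t := rfl
  have hrow : (W * Wᵀ) t = W *ᵥ W t := by ext; simp [mul_apply, mulVec, dotProduct, mul_comm]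
  have hcol : (W * Wᵀ).col t = W *ᵥ W t := by ext; simp [mul_apply, mulVec, dotProduct]
  rw [arpStep_eq, obliqueProj_EJ_single, transpose_mul, transpose_sub, transpose_smul,
    transpose_vecMulVec, transpose_one, Matrix.mul_assoc, ← Matrix.mul_assoc _ _ Wᵀ,
    (isIdempotentElem_inv_dotProduct_smul_vecMulVec (W t)).one_sub, hdiag, hrow]
  simp only [Matrix.mul_sub, Matrix.sub_mul, Matrix.mul_one, Matrix.one_mul, Matrix.mul_smul,
    Matrix.smul_mul, mul_vecMulVec, vecMulVec_mul, mulVec_single_one, vecMul_transpose, hcol]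

theorem one_sub_obliqueProj_mul_transpose_EJ_single (W : Matrix (Fin n) (Fin r) ℝ) (t : Fin n) :
    1 - obliqueProj (W * Wᵀ) (EJ fun _ : Fin 1 => t) =
      1 - (∑ l, (W t l) ^ 2)⁻¹ •
        of (fun a b => (if a = t then (1 : ℝ) else 0) * ∑ l, W t l * W b l) := by
  rw [obliqueProj_EJ_single]
  congr 2
  · simp [mul_apply, sq]
  · ext a b
    simp [vecMulVec_apply, Pi.single_apply, mul_apply]

theorem arpIter_succ (V : Matrix (Fin n) (Fin r) ℝ) (j : Fin r → Fin n) {m : ℕ} (hm : m < r) :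
    arpIter V j (m + 1) = arpStep (arpIter V j m) (j ⟨m, hm⟩) := by
  simp [arpIter, hm]

theorem arpIter_mul_transpose (V : Matrix (Fin n) (Fin r) ℝ) (j : Fin r → Fin n) :
    ∀ (m : ℕ) (hm : m ≤ r), arpIter V j m * (arpIter V j m)ᵀ = V * Vᵀ *
      (List.ofFn fun i : Fin m => 1 - obliqueProj (arpIter V j i * (arpIter V j i)ᵀ)
        (EJ fun _ : Fin 1 => j (Fin.castLE hm i))).prod
  | 0, _ => by simp [arpIter]
  | m + 1, hm => by
    rw [List.ofFn_succ', List.prod_concat, ← Matrix.mul_assoc]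
    simp only [Fin.val_castSucc, Fin.castLE_castSucc, Fin.val_last]
    rw [← arpIter_mul_transpose V j m, arpIter_succ V j hm, arpStep_mul_transpose]
    rfl

theorem isUnit_det_and_prod_eq_one_sub_obliqueProj (V : Matrix (Fin n) (Fin r) ℝ)
    (j : Fin r → Fin n) :
    ∀ (m : ℕ) (hm : m ≤ r), (∀ i : Fin r, (i : ℕ) < m → arpIter V j i (j i) ≠ 0) →
      IsUnit ((EJ fun l : Fin m => j (Fin.castLE hm l))ᵀ * (V * Vᵀ) *
          EJ fun l : Fin m => j (Fin.castLE hm l)).det ∧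
        (List.ofFn fun i : Fin m => 1 - obliqueProj (arpIter V j i * (arpIter V j i)ᵀ)
          (EJ fun _ : Fin 1 => j (Fin.castLE hm i))).prod =
          1 - obliqueProj (V * Vᵀ) (EJ fun l : Fin m => j (Fin.castLE hm l))
  | 0, _, _ => by simp [obliqueProj]
  | m + 1, hm, hnz => by
    have hm' : m ≤ r := Nat.le_of_succ_le hm
    obtain ⟨hE, hprod⟩ :=
      isUnit_det_and_prod_eq_one_sub_obliqueProj V j m hm' fun i hi => hnz i (by omega)
    set W := arpIter V j m
    have hgram : V * Vᵀ * (1 - obliqueProj (V * Vᵀ) (EJ fun l : Fin m => j (Fin.castLE hm' l))) =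
        W * Wᵀ := by
      rw [← hprod, arpIter_mul_transpose]
    have hc : IsUnit ((EJ fun _ : Fin 1 => j ⟨m, hm⟩)ᵀ * (V * Vᵀ * (1 - obliqueProj (V * Vᵀ)
        (EJ fun l : Fin m => j (Fin.castLE hm' l)))) * EJ fun _ : Fin 1 => j ⟨m, hm⟩).det := by
      rw [hgram, det_EJ_single_transpose_mul_mul, isUnit_iff_ne_zero]
      exact dotProduct_self_eq_zero.not.mpr (hnz ⟨m, hm⟩ m.lt_succ_self)
    have hsplit : (EJ fun l : Fin (m + 1) => j (Fin.castLE hm l)).submatrix id finSumFinEquiv =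
        fromCols (EJ fun l : Fin m => j (Fin.castLE hm' l)) (EJ fun _ : Fin 1 => j ⟨m, hm⟩) :=
      EJ_submatrix_finSumFinEquiv _
    obtain ⟨hdet, hproj⟩ := one_sub_obliqueProj_fromCols hE hc
    rw [← hsplit, transpose_mul_mul_submatrix_equiv, det_submatrix_equiv_self] at hdet
    rw [← hsplit, obliqueProj_submatrix_equiv, hgram] at hproj
    refine ⟨hdet, ?_⟩
    rw [List.ofFn_succ', List.prod_concat]
    simp only [Fin.val_castSucc, Fin.castLE_castSucc, Fin.val_last]
    rw [hprod]
    exact hproj.symm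

end ARP

theorem arp_oblique_product_formula_general {n r : ℕ}
    (V : Matrix (Fin n) (Fin r) ℝ)
    (j : Fin r → Fin n) (k : ℕ) (hkr : k ≤ r)
    (hnz : ∀ i : Fin r, (i : ℕ) < k → arpIter V j i (j i) ≠ 0) :
    IsUnit ((EJ (fun l : Fin k => j (Fin.castLE hkr l)))ᵀ * V * Vᵀ *
        EJ (fun l : Fin k => j (Fin.castLE hkr l))).det ∧
      (List.ofFn (fun i : Fin k =>
          (1 : Matrix (Fin n) (Fin n) ℝ) -
            (∑ l, (arpIter V j i (j (Fin.castLE hkr i)) l) ^ 2)⁻¹ •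
              Matrix.of (fun a b => (if a = j (Fin.castLE hkr i) then (1 : ℝ) else 0) *
                ∑ l, arpIter V j i (j (Fin.castLE hkr i)) l * arpIter V j i b l))).prod =
        1 - EJ (fun l : Fin k => j (Fin.castLE hkr l)) *
          ((EJ (fun l : Fin k => j (Fin.castLE hkr l)))ᵀ * V * Vᵀ *
            EJ (fun l : Fin k => j (Fin.castLE hkr l)))⁻¹ *
          ((EJ (fun l : Fin k => j (Fin.castLE hkr l)))ᵀ * V * Vᵀ) := by
  simp only [← one_sub_obliqueProj_mul_transpose_EJ_single, Matrix.mul_assoc _ V Vᵀ]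
  exact isUnit_det_and_prod_eq_one_sub_obliqueProj V j k hkr hnz

/-- product formula for the rank-one oblique projectors:
`Π̃_1 ⋯ Π̃_k = I − E_{J_k} (E_{J_k}ᵀ V Vᵀ E_{J_k})⁻¹ E_{J_k}ᵀ V Vᵀ`, together with
invertibility of the `k×k` matrix `E_{J_k}ᵀ V Vᵀ E_{J_k}`. -/
theorem arp_oblique_product_formula {n r : ℕ} (hn : 0 < n) (hr : 0 < r) (hrn : r ≤ n)
    (V : Matrix (Fin n) (Fin r) ℝ) (hV : Vᵀ * V = 1)
    (j : Fin r → Fin n) (k : ℕ) (hk1 : 1 ≤ k) (hkr : k ≤ r)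
    (hnz : ∀ i : Fin r, (i : ℕ) < k → arpIter V j i (j i) ≠ 0) :
    IsUnit ((EJ (fun l : Fin k => j (Fin.castLE hkr l)))ᵀ * V * Vᵀ *
        EJ (fun l : Fin k => j (Fin.castLE hkr l))).det ∧
      (List.ofFn (fun i : Fin k =>
          (1 : Matrix (Fin n) (Fin n) ℝ) -
            (∑ l, (arpIter V j i (j (Fin.castLE hkr i)) l) ^ 2)⁻¹ •
              Matrix.of (fun a b => (if a = j (Fin.castLE hkr i) then (1 : ℝ) else 0) *
                ∑ l, arpIter V j i (j (Fin.castLE hkr i)) l * arpIter V j i b l))).prod =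
        1 - EJ (fun l : Fin k => j (Fin.castLE hkr l)) *
          ((EJ (fun l : Fin k => j (Fin.castLE hkr l)))ᵀ * V * Vᵀ *
            EJ (fun l : Fin k => j (Fin.castLE hkr l)))⁻¹ *
          ((EJ (fun l : Fin k => j (Fin.castLE hkr l)))ᵀ * V * Vᵀ) :=
  arp_oblique_product_formula_general V j k hkr hnz
end

section
/- Let V ∈ ℝ^{n×r} with VᵀV = I_r, let Q ∈ ℝ^{r×r} be a symmetric idempotent matrix (Q = Qᵀ and Q² = Q), and set W := VQ. Let à ∈ ℝ^{m×n} satisfy ÃW = 0, and let j ∈ {1,…,n} be an index with w := W(j,:) ≠ 0. Define Π̃ := I_n − e_j (w Wᵀ)/‖w‖₂². Then ‖Ã Π̃‖_F² = ‖Ã‖_F² + ‖Ã(:,j)‖₂² / ‖w‖₂², where Ã(:,j) denotes the j-th column of Ã. -/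
open Matrix BigOperators

theorem mul_transpose_mul_self_of_orthonormal {ι κ R : Type*} [Fintype ι] [Fintype κ]
    [DecidableEq κ] [CommSemiring R] {V : Matrix ι κ R} {Q : Matrix κ κ R}
    (hV : Vᵀ * V = 1) (hQsym : Qᵀ = Q) (hQidem : Q * Q = Q) :
    V * Q * (V * Q)ᵀ * (V * Q) = V * Q := by
  rw [Matrix.mul_assoc, transpose_mul, Matrix.mul_assoc Qᵀ, ← Matrix.mul_assoc Vᵀ, hV,
    Matrix.one_mul, hQsym, hQidem, Matrix.mul_assoc, hQidem]

theorem sum_sq_row_eq_diag {ι R : Type*} [Fintype ι] [CommSemiring R] {P : Matrix ι ι R}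
    (hsym : Pᵀ = P) (hidem : P * P = P) (j : ι) : ∑ b, P j b ^ 2 = P j j := by
  conv_rhs => rw [← hidem, mul_apply]
  refine Finset.sum_congr rfl fun b _ => ?_
  rw [sq, ← transpose_apply P b j, hsym]

theorem mulVec_row_mul_transpose_eq_zero {ι κ ν R : Type*} [Fintype κ] [Fintype ν]
    [CommSemiring R] {A : Matrix ι κ R} {W : Matrix κ ν R} (hAW : A * W = 0) (j : κ) :
    A *ᵥ (W * Wᵀ) j = 0 := by
  have hrow : (W * Wᵀ) j = W *ᵥ W j := by
    ext b
    simp only [mul_apply, transpose_apply, mulVec, dotProduct, mul_comm]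
  rw [hrow, mulVec_mulVec, hAW, zero_mulVec]

theorem frobSq_sub_smul_vecMulVec {m n : ℕ} (A : Matrix (Fin m) (Fin n) ℝ) (c : ℝ)
    (x : Fin m → ℝ) {s : Fin n → ℝ} (hs : A *ᵥ s = 0) :
    frobSq (A - c • vecMulVec x s) = frobSq A + c ^ 2 * (∑ i, x i ^ 2) * ∑ b, s b ^ 2 := by
  have hrow : ∀ i, ∑ b, (A i b - c * (x i * s b)) ^ 2
      = ∑ b, A i b ^ 2 + c ^ 2 * x i ^ 2 * ∑ b, s b ^ 2 := fun i => by
    have hi : ∑ b, A i b * s b = 0 := congrFun hs i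
    have expand : ∀ b, (A i b - c * (x i * s b)) ^ 2
        = A i b ^ 2 - 2 * c * x i * (A i b * s b) + c ^ 2 * x i ^ 2 * s b ^ 2 := fun b => by ring
    simp only [expand, Finset.sum_add_distrib, Finset.sum_sub_distrib, ← Finset.mul_sum, hi,
      mul_zero, sub_zero]
  simp only [frobSq, Matrix.sub_apply, Matrix.smul_apply, vecMulVec_apply, smul_eq_mul, hrow]
  rw [Finset.sum_add_distrib, ← Finset.sum_mul, ← Finset.mul_sum]

theorem one_step_pythagoras_general {m n r : ℕ}
    (V : Matrix (Fin n) (Fin r) ℝ) (hV : Vᵀ * V = 1)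
    (Q : Matrix (Fin r) (Fin r) ℝ) (hQsym : Qᵀ = Q) (hQidem : Q * Q = Q)
    (W : Matrix (Fin n) (Fin r) ℝ) (hW : W = V * Q)
    (Atil : Matrix (Fin m) (Fin n) ℝ) (hAW : Atil * W = 0)
    (j : Fin n) :
    frobSq (Atil *
        ((1 : Matrix (Fin n) (Fin n) ℝ) -
          (∑ l, (W j l) ^ 2)⁻¹ •
            Matrix.of (fun a b => (if a = j then (1 : ℝ) else 0) * ∑ l, W j l * W b l))) =
      frobSq Atil + (∑ i, (Atil i j) ^ 2) / (∑ l, (W j l) ^ 2) := by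
  have hWWW : W * Wᵀ * W = W := hW ▸ mul_transpose_mul_self_of_orthonormal hV hQsym hQidem
  set P := W * Wᵀ
  have hPsym : Pᵀ = P := by rw [transpose_mul, transpose_transpose]
  have hPidem : P * P = P := by rw [← Matrix.mul_assoc, hWWW]
  have hS : ∑ l, W j l ^ 2 = P j j := by simp only [P, mul_apply, transpose_apply, sq]
  have hproj : Matrix.of (fun a b => (if a = j then (1 : ℝ) else 0) * ∑ l, W j l * W b l)
      = vecMulVec (Pi.single j 1) (P j) := by
    ext a b
    simp [P, vecMulVec_apply, Pi.single_apply, mul_apply]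
  rw [hproj, Matrix.mul_sub, Matrix.mul_one, Matrix.mul_smul, mul_vecMulVec, mulVec_single_one,
    frobSq_sub_smul_vecMulVec _ _ _ (mulVec_row_mul_transpose_eq_zero hAW j),
    sum_sq_row_eq_diag hPsym hPidem, hS]
  have hinv : (P j j)⁻¹ * (P j j)⁻¹ * P j j = (P j j)⁻¹ := by
    simpa only [inv_inv] using mul_self_mul_inv (P j j)⁻¹
  simp only [col_apply, sq, div_eq_inv_mul]
  rw [mul_right_comm, hinv]

/-- one-step Pythagoras identity: if `ÃW = 0` with `W = VQ`
(`V` orthonormal columns, `Q` symmetric idempotent) and `w = W(j,:) ≠ 0`, then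
`‖Ã Π̃‖_F² = ‖Ã‖_F² + ‖Ã(:,j)‖₂²/‖w‖₂²`. -/
theorem one_step_pythagoras {m n r : ℕ}
    (V : Matrix (Fin n) (Fin r) ℝ) (hV : Vᵀ * V = 1)
    (Q : Matrix (Fin r) (Fin r) ℝ) (hQsym : Qᵀ = Q) (hQidem : Q * Q = Q)
    (W : Matrix (Fin n) (Fin r) ℝ) (hW : W = V * Q)
    (Atil : Matrix (Fin m) (Fin n) ℝ) (hAW : Atil * W = 0)
    (j : Fin n) (hw : W j ≠ 0) :
    frobSq (Atil *
        ((1 : Matrix (Fin n) (Fin n) ℝ) -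
          (∑ l, (W j l) ^ 2)⁻¹ •
            Matrix.of (fun a b => (if a = j then (1 : ℝ) else 0) * ∑ l, W j l * W b l))) =
      frobSq Atil + (∑ i, (Atil i j) ^ 2) / (∑ l, (W j l) ^ 2) :=
  one_step_pythagoras_general V hV Q hQsym hQidem W hW Atil hAW j
end

section
/- Let V ∈ ℝ^{n×r} with VᵀV = I_r, let Q ∈ ℝ^{r×r} be symmetric idempotent, and set W := VQ. Let à ∈ ℝ^{m×n} satisfy ÃW = 0 and Ã(:,j) = 0 for every index j with W(j,:) = 0. For each j with W(j,:) ≠ 0 define Π̃_j := I_n − e_j (W(j,:) Wᵀ)/‖W(j,:)‖₂². Then Σ_{j=1}^n c_j = (‖W‖_F² + 1)·‖Ã‖_F², where c_j := ‖W(j,:)‖₂² · ‖Ã Π̃_j‖_F² when W(j,:) ≠ 0 and c_j := 0 when W(j,:) = 0. (Dividing by ‖W‖_F², this is the single-step conditional expectation identity E[‖Ã_k‖_F² | j_1,…,j_{k−1}] = ((r−k+2)/(r−k+1))‖Ã_{k−1}‖_F² in the proof of Theorem 2.3.) -/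
open Matrix BigOperators

/-! The Gram matrix `P = W Wᵀ` is an orthogonal projection (because `Wᵀ W = Q`), and `Ã P = 0`.
Since `e_j W(j,:) Wᵀ = e_j P(j,:)`, the matrix `Ã Π̃_j` is the rank-one update
`Ã - P_jj⁻¹ Ã(:,j) P(j,:)`. Its cross term with `Ã` vanishes as `Ã P(j,:)ᵀ = 0`, and
`‖P(j,:)‖² = (P²)_jj = P_jj`, so `‖Ã Π̃_j‖_F² = ‖Ã‖_F² + ‖Ã(:,j)‖² / P_jj`. Multiplying by
`P_jj = ‖W(j,:)‖²` and summing over `j` gives `‖W‖_F² ‖Ã‖_F² + ‖Ã‖_F²`. -/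

theorem isIdempotentElem_mul_transpose_self {R ι κ : Type*} [CommSemiring R] [Fintype ι]
    [Fintype κ] {W : Matrix ι κ R} (hW : W * (Wᵀ * W) = W) : IsIdempotentElem (W * Wᵀ) := by
  rw [IsIdempotentElem, Matrix.mul_assoc, ← Matrix.mul_assoc Wᵀ, ← Matrix.mul_assoc, hW]

theorem mul_transpose_mul_self_of_isometry_mul_projection {R ι κ : Type*} [CommSemiring R]
    [Fintype ι] [Fintype κ] [DecidableEq κ] {V : Matrix ι κ R} (hV : Vᵀ * V = 1) {Q : Matrix κ κ R}
    (hQsymm : Q.IsSymm) (hQidem : IsIdempotentElem Q) :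
    V * Q * ((V * Q)ᵀ * (V * Q)) = V * Q := by
  rw [transpose_mul, Matrix.mul_assoc Qᵀ, ← Matrix.mul_assoc Vᵀ, hV, Matrix.one_mul, hQsymm.eq,
    hQidem.eq, Matrix.mul_assoc, hQidem.eq]

theorem frobSq_sub_vecMulVec {m n : ℕ} (A : Matrix (Fin m) (Fin n) ℝ) (a : Fin m → ℝ)
    (p : Fin n → ℝ) (hAp : A *ᵥ p = 0) :
    frobSq (A - vecMulVec a p) = frobSq A + (∑ i, a i ^ 2) * ∑ b, p b ^ 2 := by
  have hAp' (i : Fin m) : ∑ b, A i b * p b = 0 := congrFun hAp i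
  calc ∑ i, ∑ b, (A i b - a i * p b) ^ 2
      = ∑ i, (∑ b, A i b ^ 2 - 2 * a i * ∑ b, A i b * p b + a i ^ 2 * ∑ b, p b ^ 2) := by
        refine Finset.sum_congr rfl fun i _ => ?_
        simp only [Finset.mul_sum, ← Finset.sum_sub_distrib, ← Finset.sum_add_distrib]
        exact Finset.sum_congr rfl fun b _ => by ring
    _ = frobSq A + (∑ i, a i ^ 2) * ∑ b, p b ^ 2 := by
        simp [hAp', frobSq, Finset.sum_add_distrib, Finset.sum_mul]

/-- When `P j j = 0` both sides reduce to `frobSq A`, because `0⁻¹ = 0`. -/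
theorem frobSq_mul_one_sub_projection {m n : ℕ} {P : Matrix (Fin n) (Fin n) ℝ}
    (hPsymm : P.IsSymm) (hPidem : IsIdempotentElem P) (A : Matrix (Fin m) (Fin n) ℝ)
    (hAP : A * P = 0) (j : Fin n) :
    frobSq (A * (1 - (P j j)⁻¹ • vecMulVec (Pi.single j 1) (P j))) =
      frobSq A + (P j j)⁻¹ * ∑ i, A i j ^ 2 := by
  have hAp : A *ᵥ P j = 0 := by
    have hPj : P j = P *ᵥ Pi.single j 1 := by
      ext b
      rw [mulVec_single_one, col_apply, hPsymm.apply]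
    rw [hPj, mulVec_mulVec, hAP, zero_mulVec]
  have hrow : ∑ b, P j b ^ 2 = P j j := by
    conv_rhs => rw [← hPidem.eq, mul_apply]
    exact Finset.sum_congr rfl fun b _ => by rw [sq, hPsymm.apply]
  rw [Matrix.mul_sub, Matrix.mul_one, Matrix.mul_smul, mul_vecMulVec, ← smul_vecMulVec,
    frobSq_sub_vecMulVec _ _ _ hAp, hrow, mulVec_single_one]
  simp only [Pi.smul_apply, col_apply, smul_eq_mul, mul_pow, ← Finset.mul_sum]
  rcases eq_or_ne (P j j) 0 with hs | hs
  · simp [hs]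
  · field_simp

/-- the single-step conditional expectation identity:
`Σ_j ‖W(j,:)‖₂² ‖Ã Π̃_j‖_F² = (‖W‖_F² + 1) ‖Ã‖_F²` (a summand with `W(j,:) = 0`
vanishes since its weight `‖W(j,:)‖₂²` is zero). -/
theorem one_step_expectation {m n r : ℕ}
    (V : Matrix (Fin n) (Fin r) ℝ) (hV : Vᵀ * V = 1)
    (Q : Matrix (Fin r) (Fin r) ℝ) (hQsym : Qᵀ = Q) (hQidem : Q * Q = Q)
    (W : Matrix (Fin n) (Fin r) ℝ) (hW : W = V * Q)
    (Atil : Matrix (Fin m) (Fin n) ℝ) (hAW : Atil * W = 0)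
    (hcols : ∀ jj : Fin n, W jj = 0 → ∀ i : Fin m, Atil i jj = 0) :
    ∑ jj : Fin n, (∑ l, (W jj l) ^ 2) *
        frobSq (Atil *
          ((1 : Matrix (Fin n) (Fin n) ℝ) -
            (∑ l, (W jj l) ^ 2)⁻¹ •
              Matrix.of (fun a b => (if a = jj then (1 : ℝ) else 0) * ∑ l, W jj l * W b l))) =
      (frobSq W + 1) * frobSq Atil := by
  have hP : IsIdempotentElem (W * Wᵀ) := isIdempotentElem_mul_transpose_self <| hW ▸
    mul_transpose_mul_self_of_isometry_mul_projection hV hQsym hQidem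
  have hAP : Atil * (W * Wᵀ) = 0 := by rw [← Matrix.mul_assoc, hAW, Matrix.zero_mul]
  have hdiag (jj : Fin n) : ∑ l, W jj l ^ 2 = (W * Wᵀ) jj jj := by simp [mul_apply, sq]
  have hrankOne (jj : Fin n) : Matrix.of (fun a b => (if a = jj then (1 : ℝ) else 0) *
      ∑ l, W jj l * W b l) = vecMulVec (Pi.single jj 1) ((W * Wᵀ) jj) := by
    ext a b; simp [vecMulVec_apply, mul_apply, Pi.single_apply]
  have hPsymm : (W * Wᵀ).IsSymm := by rw [IsSymm, transpose_mul, transpose_transpose]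
  have hcancel (jj : Fin n) :
      (W * Wᵀ) jj jj * (((W * Wᵀ) jj jj)⁻¹ * ∑ i, Atil i jj ^ 2) = ∑ i, Atil i jj ^ 2 := by
    rcases eq_or_ne (W jj) 0 with hzero | hnonzero
    · simp [hcols jj hzero]
    · refine mul_inv_cancel_left₀ ?_ _
      simpa [mul_apply, dotProduct] using mt dotProduct_self_eq_zero.mp hnonzero
  simp_rw [hrankOne, hdiag, frobSq_mul_one_sub_projection hPsymm hP Atil hAP, mul_add, hcancel,
    Finset.sum_add_distrib, ← Finset.sum_mul, ← hdiag]
  rw [frobSq, frobSq, Finset.sum_comm (f := fun i jj => Atil i jj ^ 2)]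
  ring
end

section
/- (Quasi-optimal column subset selection, Corollary 2.4 in existence form.) Let A ∈ ℝ^{m×n} and let r be a positive integer with r ≤ min(m,n). Then there exist distinct indices j_1,…,j_r ∈ {1,…,n} and a matrix C ∈ ℝ^{r×n} such that for every matrix B ∈ ℝ^{m×n} of rank at most r, ‖A − A E_J C‖_F² ≤ (r+1) · ‖A − B‖_F². In particular, the error of approximating A from its r selected columns is within a factor r+1 (in squared Frobenius norm) of the best rank-r approximation error σ_{r+1}²(A) + ⋯ + σ_n²(A). -/
/-!
Take `V` with orthonormal columns minimizing `‖A - A V Vᵀ‖_F²`; it exists because the set of such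
`V` is compact, and it beats every `B` of rank at most `r`, since the rows of `B` lie in the span
of the columns of some such frame `W`, and `A - A W Wᵀ = (A - B)(1 - W Wᵀ)`.

Put `E = A - A V Vᵀ`. For columns `g` with `V_g` (rows `g` of `V`) invertible and
`C = (V_gᵀ)⁻¹ Vᵀ` we get `A - A E_g C = E - F_g Vᵀ` with `F_g = E E_g (V_gᵀ)⁻¹`, whose squared
norm is `‖E‖² + ‖F_g‖²` because `E V = 0`. Weight `g` by `det (V_g)²` (volume sampling): by
Cauchy–Binet the weights sum to `r!`, and by Cramer's rule `det (V_g)² ‖F_g‖²` is the sum of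
the squared minors `det (V with column c replaced by row i of E)_g²`, which Cauchy–Binet sums over
`g` to `r! · r · ‖E‖²`. Hence some `g` has `‖F_g‖² ≤ r ‖E‖²`.
-/

open Matrix BigOperators

section CauchyBinet

variable {ι κ R : Type*} [Fintype ι] [Fintype κ] [DecidableEq κ] [CommRing R]

theorem det_transpose_mul_eq_sum (V U : Matrix ι κ R) :
    det (Vᵀ * U) = ∑ g : κ → ι, det (V.submatrix g id) * ∏ k, U (g k) k := by
  have expand (σ : Equiv.Perm κ) : ∏ k, (Vᵀ * U) (σ k) k =
      ∑ g : κ → ι, ∏ k, V (g k) (σ k) * U (g k) k := by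
    simp only [mul_apply, transpose_apply]
    rw [Finset.prod_univ_sum, Fintype.piFinset_univ]
  rw [det_apply']
  simp_rw [expand, Finset.mul_sum]
  rw [Finset.sum_comm]
  refine Finset.sum_congr rfl fun g _ => ?_
  rw [← det_transpose, det_apply', Finset.sum_mul]
  refine Finset.sum_congr rfl fun σ _ => ?_
  simp [Finset.prod_mul_distrib, mul_assoc]

theorem sum_det_submatrix_mul_det_submatrix (V U : Matrix ι κ R) :
    ∑ g : κ → ι, det (V.submatrix g id) * det (U.submatrix g id) =
      (Fintype.card κ).factorial * det (Vᵀ * U) := by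
  have reindex (σ : Equiv.Perm κ) :
      ∑ g : κ → ι, det (V.submatrix g id) * ((Equiv.Perm.sign σ : R) * ∏ k, U (g (σ k)) k) =
        det (Vᵀ * U) := by
    rw [det_transpose_mul_eq_sum]
    refine Fintype.sum_equiv (σ.symm.arrowCongr (Equiv.refl ι)) _ _ fun g => ?_
    change _ = det ((V.submatrix g id).submatrix σ id) * ∏ k, U (g (σ k)) k
    rw [det_permute]
    ring
  simp_rw [det_apply' (U.submatrix _ id), submatrix_apply, Finset.mul_sum]
  rw [Finset.sum_comm]
  simp only [id, reindex, Finset.sum_const, Finset.card_univ, Fintype.card_perm, nsmul_eq_mul]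

end CauchyBinet

lemma exists_pos_weight_le_of_sum_mul_le {α : Type*} [Fintype α] {w f : α → ℝ} {M : ℝ}
    (hw : ∀ a, 0 ≤ w a) (hpos : 0 < ∑ a, w a) (h : ∑ a, w a * f a ≤ (∑ a, w a) * M) :
    ∃ a, 0 < w a ∧ f a ≤ M := by
  by_contra! hlt
  obtain ⟨a, -, ha⟩ :=
    Finset.exists_lt_of_sum_lt (by simpa using hpos : ∑ _a : α, (0 : ℝ) < ∑ a, w a)
  have : ∑ a, w a * M < ∑ a, w a * f a :=
    Finset.sum_lt_sum (fun b _ => (hw b).eq_or_lt.elim (fun hb => by simp [← hb])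
      fun hb => (mul_lt_mul_of_pos_left (hlt b hb) hb).le)
      ⟨a, Finset.mem_univ a, mul_lt_mul_of_pos_left (hlt a ha) ha⟩
  rw [← Finset.sum_mul] at this
  linarith

section ColumnSelection

variable {m n r : ℕ}

lemma frobSq_nonneg (A : Matrix (Fin m) (Fin n) ℝ) : 0 ≤ frobSq A := by
  unfold frobSq; positivity

lemma frobSq_eq_trace_mul_transpose (A : Matrix (Fin m) (Fin n) ℝ) :
    frobSq A = trace (A * Aᵀ) := by
  simp [frobSq, trace, mul_apply, sq]

lemma frobSq_sub_mul_transpose (E : Matrix (Fin m) (Fin n) ℝ) (F : Matrix (Fin m) (Fin r) ℝ)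
    {V : Matrix (Fin n) (Fin r) ℝ} (hV : Vᵀ * V = 1) (hEV : E * V = 0) :
    frobSq (E - F * Vᵀ) = frobSq E + frobSq F := by
  have hVE : Vᵀ * Eᵀ = 0 := by rw [← transpose_mul, hEV, transpose_zero]
  have hgram : (E - F * Vᵀ) * (E - F * Vᵀ)ᵀ = E * Eᵀ + F * Fᵀ := by
    rw [transpose_sub, transpose_mul, transpose_transpose, Matrix.sub_mul, Matrix.mul_sub,
      Matrix.mul_sub, ← Matrix.mul_assoc E V, hEV, Matrix.mul_assoc F Vᵀ Eᵀ, hVE,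
      Matrix.mul_assoc F Vᵀ, ← Matrix.mul_assoc Vᵀ V, hV]
    simp
  simp only [frobSq_eq_trace_mul_transpose, hgram, trace_add]

lemma frobSq_sub_mul_proj_le (M : Matrix (Fin m) (Fin n) ℝ) {V : Matrix (Fin n) (Fin r) ℝ}
    (hV : Vᵀ * V = 1) : frobSq (M - M * (V * Vᵀ)) ≤ frobSq M := by
  have hEV : (M - M * (V * Vᵀ)) * V = 0 := by
    rw [Matrix.sub_mul, Matrix.mul_assoc, Matrix.mul_assoc, hV, Matrix.mul_one, sub_self]
  have hsplit := frobSq_sub_mul_transpose _ (-(M * V)) hV hEV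
  rw [Matrix.neg_mul, sub_neg_eq_add, Matrix.mul_assoc, sub_add_cancel] at hsplit
  linarith [frobSq_nonneg (-(M * V))]

lemma mul_EJ {k : ℕ} (X : Matrix (Fin m) (Fin n) ℝ) (g : Fin k → Fin n) :
    X * EJ g = X.submatrix id g := by
  ext i l
  simp [EJ, mul_apply]

lemma det_transpose_mul_self_updateCol {V : Matrix (Fin n) (Fin r) ℝ} (hV : Vᵀ * V = 1)
    {x : Fin n → ℝ} (hxV : x ᵥ* V = 0) (c : Fin r) :
    det ((V.updateCol c x)ᵀ * V.updateCol c x) = ∑ t, x t ^ 2 := by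
  have hgram : (V.updateCol c x)ᵀ * V.updateCol c x =
      diagonal (fun a => if a = c then ∑ t, x t ^ 2 else 1) := by
    ext a b
    have h1 := congrFun (congrFun hV a) b
    have h2 := congrFun hxV a
    have h3 := congrFun hxV b
    simp only [mul_apply, transpose_apply, one_apply, vecMul, dotProduct, Pi.zero_apply]
      at h1 h2 h3
    simp only [mul_apply, transpose_apply, updateCol_apply, diagonal_apply]
    split_ifs <;> simp_all [sq, mul_comm]
  rw [hgram, det_diagonal, Finset.prod_ite_eq']
  simp

lemma det_submatrix_mul_apply_eq_det_updateCol {V : Matrix (Fin n) (Fin r) ℝ}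
    {g : Fin r → Fin n} (hg : IsUnit (V.submatrix g id).det) (E : Matrix (Fin m) (Fin n) ℝ)
    (i : Fin m) (c : Fin r) :
    det (V.submatrix g id) * (E * EJ g * (V.submatrix g id)ᵀ⁻¹) i c =
      det ((V.updateCol c (E i)).submatrix g id) := by
  have cramer := congrFun (det_smul_inv_vecMul_eq_cramer_transpose (V.submatrix g id)ᵀ
    (fun k => E i (g k)) (by rwa [det_transpose])) c
  rw [det_transpose, transpose_transpose, cramer_apply] at cramer
  convert cramer using 2
  · simp [mul_EJ, vecMul, mul_apply, dotProduct]
  · ext a b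
    simp [updateCol_apply]

lemma sum_det_submatrix_sq {V : Matrix (Fin n) (Fin r) ℝ} (hV : Vᵀ * V = 1) :
    ∑ g : Fin r → Fin n, det (V.submatrix g id) ^ 2 = r.factorial := by
  simp_rw [sq, sum_det_submatrix_mul_det_submatrix, hV, det_one, Fintype.card_fin, mul_one]

-- Only an inequality: for singular `V_g` the inverse is the junk value `0`, while the minors on
-- the right need not vanish.
lemma det_submatrix_sq_mul_frobSq_le (V : Matrix (Fin n) (Fin r) ℝ)
    (E : Matrix (Fin m) (Fin n) ℝ) (g : Fin r → Fin n) :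
    det (V.submatrix g id) ^ 2 * frobSq (E * EJ g * (V.submatrix g id)ᵀ⁻¹) ≤
      ∑ i, ∑ c, det ((V.updateCol c (E i)).submatrix g id) ^ 2 := by
  by_cases hg : IsUnit (V.submatrix g id).det
  · simp_rw [frobSq, Finset.mul_sum, ← det_submatrix_mul_apply_eq_det_updateCol hg, mul_pow]
    rfl
  · rw [isUnit_iff_ne_zero, not_not] at hg
    rw [hg, sq, zero_mul, zero_mul]
    positivity

lemma sum_det_submatrix_sq_mul_frobSq_le {V : Matrix (Fin n) (Fin r) ℝ} (hV : Vᵀ * V = 1)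
    {E : Matrix (Fin m) (Fin n) ℝ} (hEV : E * V = 0) :
    ∑ g : Fin r → Fin n, det (V.submatrix g id) ^ 2 * frobSq (E * EJ g * (V.submatrix g id)ᵀ⁻¹)
      ≤ r.factorial * (r * frobSq E) := by
  calc _ ≤ ∑ g : Fin r → Fin n, ∑ i, ∑ c, det ((V.updateCol c (E i)).submatrix g id) ^ 2 :=
        Finset.sum_le_sum fun g _ => det_submatrix_sq_mul_frobSq_le V E g
    _ = ∑ i, ∑ c : Fin r, r.factorial * ∑ t, E i t ^ 2 := by
        rw [Finset.sum_comm]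
        refine Finset.sum_congr rfl fun i _ => ?_
        rw [Finset.sum_comm]
        refine Finset.sum_congr rfl fun c _ => ?_
        have hrow : E i ᵥ* V = 0 := by rw [← mul_apply_eq_vecMul, hEV]; rfl
        simp_rw [sq, sum_det_submatrix_mul_det_submatrix, Fintype.card_fin,
          det_transpose_mul_self_updateCol hV hrow, sq]
    _ = r.factorial * (r * frobSq E) := by
        simp [frobSq, Finset.mul_sum, mul_left_comm]

lemma exists_isUnit_det_frobSq_le {V : Matrix (Fin n) (Fin r) ℝ} (hV : Vᵀ * V = 1)
    {E : Matrix (Fin m) (Fin n) ℝ} (hEV : E * V = 0) :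
    ∃ g : Fin r → Fin n, IsUnit (V.submatrix g id).det ∧
      frobSq (E * EJ g * (V.submatrix g id)ᵀ⁻¹) ≤ r * frobSq E := by
  obtain ⟨g, hg, hle⟩ := exists_pos_weight_le_of_sum_mul_le (fun g => sq_nonneg _)
    (by rw [sum_det_submatrix_sq hV]; positivity)
    (by rw [sum_det_submatrix_sq hV]; exact sum_det_submatrix_sq_mul_frobSq_le hV hEV)
  exact ⟨g, isUnit_iff_ne_zero.2 fun h => by simp [h] at hg, hle⟩

lemma exists_injective_frobSq_sub_le (A : Matrix (Fin m) (Fin n) ℝ)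
    {V : Matrix (Fin n) (Fin r) ℝ} (hV : Vᵀ * V = 1) :
    ∃ g : Fin r → Fin n, Function.Injective g ∧ ∃ C : Matrix (Fin r) (Fin n) ℝ,
      frobSq (A - A * EJ g * C) ≤ (r + 1) * frobSq (A - A * (V * Vᵀ)) := by
  set E := A - A * (V * Vᵀ)
  have hEV : E * V = 0 := by
    rw [Matrix.sub_mul, Matrix.mul_assoc, Matrix.mul_assoc, hV, Matrix.mul_one, sub_self]
  obtain ⟨g, hg, hle⟩ := exists_isUnit_det_frobSq_le hV hEV
  set M := V.submatrix g id
  have hinj : Function.Injective g := fun a b hab => by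
    by_contra hne
    exact hg.ne_zero (det_zero_of_row_eq hne (by ext; simp [M, hab]))
  have hM : Mᵀ * Mᵀ⁻¹ = 1 := mul_nonsing_inv _ (by rwa [det_transpose])
  have hVEJ : Vᵀ * EJ g = Mᵀ := by rw [mul_EJ, ← transpose_submatrix]
  have hresidual : A - A * EJ g * (Mᵀ⁻¹ * Vᵀ) = E - E * EJ g * Mᵀ⁻¹ * Vᵀ := by
    have hA : A = E + A * V * Vᵀ := by simp [E, Matrix.mul_assoc]
    conv_lhs => rw [hA]
    rw [Matrix.add_mul, Matrix.add_mul, Matrix.mul_assoc (A * V) Vᵀ (EJ g), hVEJ,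
      Matrix.mul_assoc (A * V) Mᵀ, ← Matrix.mul_assoc Mᵀ, hM, Matrix.one_mul]
    simp only [Matrix.mul_assoc]
    abel
  refine ⟨g, hinj, Mᵀ⁻¹ * Vᵀ, ?_⟩
  rw [hresidual, frobSq_sub_mul_transpose _ _ hV hEV]
  linarith

end ColumnSelection

theorem Submodule.exists_le_finrank_eq {K V : Type*} [DivisionRing K] [AddCommGroup V]
    [Module K V] [FiniteDimensional K V] (S : Submodule K V) {k : ℕ}
    (hSk : Module.finrank K S ≤ k) (hk : k ≤ Module.finrank K V) :
    ∃ T : Submodule K V, S ≤ T ∧ Module.finrank K T = k := by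
  induction k, hSk using Nat.le_induction with
  | base => exact ⟨S, le_rfl, rfl⟩
  | succ k _ ih =>
    obtain ⟨T, hST, hT⟩ := ih (by omega)
    obtain ⟨x, hx⟩ := T.exists_of_finrank_lt (by omega)
    have hxT : x ∉ T := by simpa using hx 1 one_ne_zero
    exact ⟨T ⊔ K ∙ x, hST.trans le_sup_left, by rw [finrank_sup_span_singleton hxT, hT]⟩

lemma exists_orthonormal_frame_of_rank_le {m n r : ℕ} (hrn : r ≤ n)
    (B : Matrix (Fin m) (Fin n) ℝ) (hB : B.rank ≤ r) :
    ∃ V : Matrix (Fin n) (Fin r) ℝ, Vᵀ * V = 1 ∧ B * (V * Vᵀ) = B := by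
  let e := (WithLp.linearEquiv 2 ℝ (Fin n → ℝ)).symm
  let S := (Submodule.span ℝ (Set.range B.row)).map
    (e : (Fin n → ℝ) →ₗ[ℝ] EuclideanSpace ℝ (Fin n))
  have hS : Module.finrank ℝ S ≤ r := by
    rwa [LinearEquiv.finrank_map_eq, ← rank_eq_finrank_span_row]
  obtain ⟨T, hST, hT⟩ := S.exists_le_finrank_eq hS (by simpa using hrn)
  let b := (stdOrthonormalBasis ℝ T).reindex (finCongr hT)
  refine ⟨Matrix.of fun i k => (b k : EuclideanSpace ℝ (Fin n)) i, ?_, ?_⟩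
  · ext k l
    have := orthonormal_iff_ite.1 b.orthonormal k l
    rw [Submodule.coe_inner, PiLp.inner_apply] at this
    simpa [mul_apply, one_apply, mul_comm] using this
  · ext i l
    have hBi : e (B i) ∈ T := hST (Submodule.mem_map_of_mem (Submodule.subset_span ⟨i, rfl⟩))
    have := congrArg (fun x : T => (x : EuclideanSpace ℝ (Fin n)) l) (b.sum_repr' ⟨e (B i), hBi⟩)
    simp [Submodule.coe_inner, PiLp.inner_apply, e] at this
    simp only [mul_apply, of_apply, transpose_apply, Finset.mul_sum, Finset.sum_mul] at this ⊢
    rw [Finset.sum_comm, ← this]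
    simp only [mul_assoc]

lemma isCompact_setOf_transpose_mul_self_eq_one {ι κ : Type*} [Fintype ι] [Fintype κ]
    [DecidableEq κ] : IsCompact {V : Matrix ι κ ℝ | Vᵀ * V = 1} := by
  refine (isCompact_univ_pi fun _ => isCompact_univ_pi fun _ => isCompact_Icc (a := -1) (b := 1))
    |>.of_isClosed_subset
      (isClosed_eq (continuous_id.matrix_transpose.matrix_mul continuous_id) continuous_const) ?_
  rintro (V : Matrix ι κ ℝ) hV i - k -
  have hcol : ∑ j, V j k ^ 2 = 1 := by
    simpa [mul_apply, sq] using congrFun (congrFun hV k) k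
  have hsq : V i k ^ 2 ≤ 1 :=
    hcol ▸ Finset.single_le_sum (fun j _ => sq_nonneg (V j k)) (Finset.mem_univ i)
  exact abs_le.1 (sq_le_one_iff_abs_le_one _ |>.1 hsq)

lemma continuous_frobSq {m n : ℕ} : Continuous (frobSq : Matrix (Fin m) (Fin n) ℝ → ℝ) := by
  unfold frobSq; fun_prop

lemma exists_forall_frobSq_sub_mul_proj_le {m n r : ℕ} (hrn : r ≤ n)
    (A : Matrix (Fin m) (Fin n) ℝ) :
    ∃ V : Matrix (Fin n) (Fin r) ℝ, Vᵀ * V = 1 ∧ ∀ W : Matrix (Fin n) (Fin r) ℝ, Wᵀ * W = 1 →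
      frobSq (A - A * (V * Vᵀ)) ≤ frobSq (A - A * (W * Wᵀ)) := by
  obtain ⟨V₀, hV₀, -⟩ :=
    exists_orthonormal_frame_of_rank_le hrn (0 : Matrix (Fin 0) (Fin n) ℝ) (by simp)
  have hcont : Continuous fun V : Matrix (Fin n) (Fin r) ℝ => frobSq (A - A * (V * Vᵀ)) :=
    continuous_frobSq.comp (by fun_prop)
  obtain ⟨V, hV, hmin⟩ :=
    isCompact_setOf_transpose_mul_self_eq_one.exists_isMinOn ⟨V₀, hV₀⟩ hcont.continuousOn
  exact ⟨V, hV, fun W hW => hmin hW⟩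

theorem quasi_optimal_cssp_general {m n r : ℕ} (hrn : r ≤ n)
    (A : Matrix (Fin m) (Fin n) ℝ) :
    ∃ j : Fin r → Fin n, Function.Injective j ∧
      ∃ C : Matrix (Fin r) (Fin n) ℝ,
        ∀ B : Matrix (Fin m) (Fin n) ℝ, B.rank ≤ r →
          frobSq (A - A * EJ j * C) ≤ ((r : ℝ) + 1) * frobSq (A - B) := by
  obtain ⟨V, hV, hVmin⟩ := exists_forall_frobSq_sub_mul_proj_le hrn A
  obtain ⟨j, hj, C, hC⟩ := exists_injective_frobSq_sub_le A hV
  refine ⟨j, hj, C, fun B hB => ?_⟩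
  obtain ⟨W, hW, hBW⟩ := exists_orthonormal_frame_of_rank_le hrn B hB
  have hAB : A - A * (W * Wᵀ) = (A - B) - (A - B) * (W * Wᵀ) := by
    rw [Matrix.sub_mul, hBW]; abel
  calc frobSq (A - A * EJ j * C) ≤ (r + 1) * frobSq (A - A * (V * Vᵀ)) := hC
    _ ≤ (r + 1) * frobSq (A - A * (W * Wᵀ)) := by gcongr; exact hVmin W hW
    _ ≤ (r + 1) * frobSq (A - B) := by gcongr; rw [hAB]; exact frobSq_sub_mul_proj_le _ hW

/-- quasi-optimal column subset selection: there exist `r` distinct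
columns of `A` and a coefficient matrix `C` such that `‖A − A E_J C‖_F²` is within a
factor `r+1` of every rank-`r` approximation error. -/
theorem quasi_optimal_cssp {m n r : ℕ} (hr : 0 < r) (hrm : r ≤ m) (hrn : r ≤ n)
    (A : Matrix (Fin m) (Fin n) ℝ) :
    ∃ j : Fin r → Fin n, Function.Injective j ∧
      ∃ C : Matrix (Fin r) (Fin n) ℝ,
        ∀ B : Matrix (Fin m) (Fin n) ℝ, B.rank ≤ r →
          frobSq (A - A * EJ j * C) ≤ ((r : ℝ) + 1) * frobSq (A - B) :=
  quasi_optimal_cssp_general hrn A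
end

section
/- Suppose the index sequence j = (j_1,…,j_r) satisfies v_i = V_{i-1}(j_i,:) ≠ 0 for every i = 1,…,r (equivalently, w(j) > 0). Then the indices j_1,…,j_r are pairwise distinct and the r×r matrix Vᵀ E_J = V(J,:)ᵀ is invertible. In particular, Adaptive Randomized Pivoting never selects an index twice, and the selected row submatrix V(J,:) of V is always invertible. -/
open Matrix BigOperators

lemma sum_sq_ne_zero {r : ℕ} {v : Fin r → ℝ} (hv : v ≠ 0) : ∑ l, (v l) ^ 2 ≠ 0 := by
  intro h
  apply hv
  funext l
  have h0 : ∀ i ∈ Finset.univ, (0:ℝ) ≤ (v i) ^ 2 := fun i _ => sq_nonneg _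
  have := (Finset.sum_eq_zero_iff_of_nonneg h0).mp h l (Finset.mem_univ l)
  exact pow_eq_zero_iff (two_ne_zero) |>.mp this

lemma arpStep_apply {n r : ℕ} (W : Matrix (Fin n) (Fin r) ℝ) (q : Fin n) (hq : W q ≠ 0)
    (p : Fin n) :
    arpStep W q p
      = W p - ((∑ l, (W q l) ^ 2)⁻¹ * ∑ l, W p l * W q l) • W q := by
  funext b
  simp only [arpStep, if_neg hq, Matrix.mul_apply, Matrix.sub_apply, Matrix.smul_apply,
    Matrix.one_apply, Matrix.of_apply, smul_eq_mul, Pi.sub_apply, Pi.smul_apply]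
  rw [Finset.sum_congr rfl (fun a _ => by split <;> ring :
    ∀ a ∈ Finset.univ, W p a * ((if a = b then (1:ℝ) else 0) - (∑ l, (W q l) ^ 2)⁻¹ * (W q a * W q b))
      = (if a = b then W p a else 0) - (∑ l, (W q l) ^ 2)⁻¹ * (W p a * W q a) * W q b)]
  rw [Finset.sum_sub_distrib, Finset.sum_ite_eq' Finset.univ b (fun a => W p a)]
  simp only [Finset.mem_univ, if_true]
  rw [show ∀ S : Finset (Fin r), ∑ a ∈ S, (∑ x : Fin r, W q x ^ 2)⁻¹ * (W p a * W q a) * W q b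
      = (∑ x : Fin r, W q x ^ 2)⁻¹ * (∑ a ∈ S, W p a * W q a) * W q b from
    fun S => by rw [Finset.mul_sum, Finset.sum_mul]]

lemma arpStep_row_zero {n r : ℕ} (W : Matrix (Fin n) (Fin r) ℝ) (q p : Fin n)
    (hp : W p = 0) : arpStep W q p = 0 := by
  by_cases hq : W q = 0
  · simp [arpStep, hq, hp]
  · rw [arpStep_apply W q hq p, hp]
    funext b
    simp [show ∀ a, W p a = 0 from fun a => congrFun hp a]

lemma arpStep_row_self {n r : ℕ} (W : Matrix (Fin n) (Fin r) ℝ) (q : Fin n) :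
    arpStep W q q = 0 := by
  by_cases hq : W q = 0
  · simp [arpStep, hq]
  · rw [arpStep_apply W q hq q]
    have hs : (∑ l, (W q l) ^ 2) ≠ 0 := sum_sq_ne_zero hq
    have : (∑ l, W q l * W q l) = ∑ l, (W q l) ^ 2 := by
      exact Finset.sum_congr rfl fun l _ => (sq (W q l)).symm
    rw [this, inv_mul_cancel₀ hs, one_smul, sub_self]

lemma arpStep_exists {n r : ℕ} (W : Matrix (Fin n) (Fin r) ℝ) (q p : Fin n) :
    ∃ s : ℝ, arpStep W q p = W p - s • W q := by
  by_cases hq : W q = 0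
  · exact ⟨0, by simp [arpStep, hq]⟩
  · exact ⟨_, arpStep_apply W q hq p⟩

lemma arpIter_row_eq_zero {n r : ℕ} (V : Matrix (Fin n) (Fin r) ℝ) (j : Fin r → Fin n)
    (k : ℕ) (i : Fin r) (hik : i.val < k) : arpIter V j k (j i) = 0 := by
  induction k with
  | zero => omega
  | succ k ih =>
    rw [arpIter]
    rcases Nat.lt_or_ge i.val k with h | h
    · split
      · exact arpStep_row_zero _ _ _ (ih h)
      · exact ih h
    · have hik' : i.val = k := by omega
      have hkr : k < r := hik' ▸ i.isLt
      rw [dif_pos hkr]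
      have : (⟨k, hkr⟩ : Fin r) = i := Fin.ext hik'.symm
      rw [this]
      exact arpStep_row_self _ _

lemma dot_sub_smul {r : ℕ} (u w v : Fin r → ℝ) (s : ℝ) :
    ∑ l, (u - s • w) l * v l = (∑ l, u l * v l) - s * ∑ l, w l * v l := by
  rw [Finset.mul_sum, ← Finset.sum_sub_distrib]
  exact Finset.sum_congr rfl fun l _ => by simp [sub_mul, mul_assoc]

lemma arpIter_dot {n r : ℕ} (V : Matrix (Fin n) (Fin r) ℝ) (j : Fin r → Fin n)
    (hnz : ∀ k : Fin r, arpIter V j k (j k) ≠ 0)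
    (i : Fin r) (k : ℕ) (hik : i.val < k) (p : Fin n) :
    ∑ l, arpIter V j k p l * arpIter V j i.val (j i) l = 0 := by
  induction k generalizing p with
  | zero => omega
  | succ k ih =>
    rcases Nat.lt_or_ge i.val k with h | h
    · rw [arpIter]
      split
      · rename_i hkr
        obtain ⟨s, hs⟩ := arpStep_exists (arpIter V j k) (j ⟨k, hkr⟩) p
        rw [hs, dot_sub_smul, ih h p, ih h (j ⟨k, hkr⟩)]
        ring
      · exact ih h p
    · have hik' : i.val = k := by omega
      have hkr : k < r := hik' ▸ i.isLt
      rw [arpIter, dif_pos hkr]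
      have hfin : (⟨k, hkr⟩ : Fin r) = i := Fin.ext hik'.symm
      rw [hfin]
      have hWi : arpIter V j k (j i) = arpIter V j i.val (j i) := by rw [hik']
      have hq : arpIter V j k (j i) ≠ 0 := by rw [hWi]; exact hnz i
      rw [arpStep_apply _ (j i) hq p, dot_sub_smul, hWi]
      have hsq : (∑ l, arpIter V j i.val (j i) l * arpIter V j i.val (j i) l)
          = ∑ l, (arpIter V j i.val (j i) l) ^ 2 :=
        Finset.sum_congr rfl fun l _ => (sq _).symm
      rw [hsq, mul_right_comm, inv_mul_cancel₀ (sum_sq_ne_zero (hnz i)), one_mul, sub_self]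

lemma arpIter_mem_span {n r : ℕ} (V : Matrix (Fin n) (Fin r) ℝ) (j : Fin r → Fin n)
    (k : ℕ) (i : Fin r) :
    arpIter V j k (j i) ∈ Submodule.span ℝ (Set.range fun l : Fin r => V (j l)) := by
  induction k generalizing i with
  | zero => exact Submodule.subset_span ⟨i, rfl⟩
  | succ k ih =>
    rw [arpIter]
    split
    · rename_i hkr
      obtain ⟨s, hs⟩ := arpStep_exists (arpIter V j k) (j ⟨k, hkr⟩) (j i)
      rw [hs]
      exact Submodule.sub_mem _ (ih i) (Submodule.smul_mem _ s (ih ⟨k, hkr⟩))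
    · exact ih i


/-- if every row selected by ARP is nonzero (equivalently `w(j) > 0`),
then the selected indices are pairwise distinct and `Vᵀ E_J = V(J,:)ᵀ` is invertible. -/
theorem arp_indices_distinct_and_invertible {n r : ℕ} (hn : 0 < n) (hr : 0 < r) (hrn : r ≤ n)
    (V : Matrix (Fin n) (Fin r) ℝ) (hV : Vᵀ * V = 1)
    (j : Fin r → Fin n)
    (hnz : ∀ k : Fin r, arpIter V j k (j k) ≠ 0) :
    Function.Injective j ∧ IsUnit (Vᵀ * EJ j).det := by
  set v : Fin r → (Fin r → ℝ) := fun i => arpIter V j i.val (j i) with hv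
  have hdot : ∀ i k : Fin r, i ≠ k → ∑ l, v k l * v i l = 0 := by
    intro i k hik
    rcases lt_or_gt_of_ne hik with h | h
    · exact arpIter_dot V j hnz i k.val h (j k)
    · rw [show (∑ l, v k l * v i l) = ∑ l, v i l * v k l from
        Finset.sum_congr rfl fun l _ => mul_comm _ _]
      exact arpIter_dot V j hnz k i.val h (j i)
  have hinj : Function.Injective j := by
    intro a b hab
    by_contra hne
    rcases lt_or_gt_of_ne hne with h | h
    · have := arpIter_row_eq_zero V j b.val a h
      rw [hab] at this
      exact hnz b this
    · have := arpIter_row_eq_zero V j a.val b h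
      rw [← hab] at this
      exact hnz a this
  refine ⟨hinj, ?_⟩
  have hli : LinearIndependent ℝ v := by
    rw [Fintype.linearIndependent_iff]
    intro g hg i
    have h0 : ∑ l, (∑ k, g k • v k) l * v i l = 0 := by rw [hg]; simp
    have hswap : ∑ l, (∑ k, g k • v k) l * v i l = ∑ k, g k * ∑ l, v k l * v i l := by
      simp only [Finset.sum_apply, Pi.smul_apply, smul_eq_mul, Finset.sum_mul, Finset.mul_sum]
      rw [Finset.sum_comm]
      exact Finset.sum_congr rfl fun k _ => Finset.sum_congr rfl fun l _ => by ring
    rw [hswap, Finset.sum_eq_single i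
      (fun k _ hk => by rw [hdot i k (Ne.symm hk), mul_zero])
      (fun h => absurd (Finset.mem_univ i) h)] at h0
    have hsum : (∑ l, v i l * v i l) = ∑ l, (v i l) ^ 2 :=
      Finset.sum_congr rfl fun l _ => (sq _).symm
    rw [hsum] at h0
    exact (mul_eq_zero.mp h0).resolve_right (sum_sq_ne_zero (hnz i))
  haveI : Nonempty (Fin r) := ⟨⟨0, hr⟩⟩
  have hcard : Fintype.card (Fin r) = Module.finrank ℝ (Fin r → ℝ) := by
    simp [Module.finrank_fin_fun]
  have hspan := hli.span_eq_top_of_card_eq_finrank hcard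
  have hT : (⊤ : Submodule ℝ (Fin r → ℝ))
      ≤ Submodule.span ℝ (Set.range fun l : Fin r => V (j l)) := by
    rw [← hspan]
    apply Submodule.span_le.mpr
    rintro _ ⟨i, rfl⟩
    exact arpIter_mem_span V j i.val i
  set M := Vᵀ * EJ j with hM
  have hMcol : ∀ l : Fin r, M.mulVec (Pi.single l 1) = V (j l) := by
    intro l
    funext a
    simp only [hM, EJ, Matrix.mulVec, dotProduct, Matrix.mul_apply, Matrix.transpose_apply,
      Matrix.of_apply, Pi.single_apply, mul_ite, mul_one, mul_zero, ite_mul, zero_mul]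
    rw [Finset.sum_eq_single l (fun b _ hb => by simp [hb]) (fun h => absurd (Finset.mem_univ l) h)]
    simp [Finset.sum_ite_eq' Finset.univ (j l) (fun i => V i a)]
  have hrange : Submodule.span ℝ (Set.range fun l : Fin r => V (j l))
      ≤ LinearMap.range M.mulVecLin := by
    apply Submodule.span_le.mpr
    rintro _ ⟨l, rfl⟩
    exact ⟨Pi.single l 1, by rw [Matrix.mulVecLin_apply, hMcol l]⟩
  have hsurj : Function.Surjective M.mulVec := by
    intro y
    obtain ⟨x, hx⟩ := hrange (hT (Submodule.mem_top (x := y)))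
    exact ⟨x, by rw [← Matrix.mulVecLin_apply]; exact hx⟩
  exact (Matrix.isUnit_iff_isUnit_det M).mp (Matrix.mulVec_surjective_iff_isUnit.mp hsurj)
end

section
/- Let A ∈ ℝ^{m×n}, let j_1,…,j_r ∈ {1,…,n} and i_1,…,i_r ∈ {1,…,m} be indices, and suppose A E_J = Q R for some Q ∈ ℝ^{m×r} and some invertible R ∈ ℝ^{r×r}, and that the r×r matrix E_Iᵀ Q is invertible. Then the r×r matrix E_Iᵀ A E_J (i.e., A(I,J)) is invertible, and A − A E_J (E_Iᵀ A E_J)⁻¹ E_Iᵀ A = (I_m − Q (E_Iᵀ Q)⁻¹ E_Iᵀ) A. That is, the cross approximation A(:,J) A(I,J)⁻¹ A(I,:) equals the oblique projection Q(E_IᵀQ)⁻¹E_Iᵀ A onto the column span of A(:,J). -/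
open Matrix BigOperators

/-- if `A E_J = QR` with `R` invertible and `E_Iᵀ Q` invertible, then
`A(I,J)` is invertible and the cross approximation equals the oblique projection
`Q (E_Iᵀ Q)⁻¹ E_Iᵀ A`. -/
theorem cross_approx_as_oblique_projection {m n r : ℕ}
    (A : Matrix (Fin m) (Fin n) ℝ)
    (j : Fin r → Fin n) (i : Fin r → Fin m)
    (Q : Matrix (Fin m) (Fin r) ℝ) (R : Matrix (Fin r) (Fin r) ℝ)
    (hQR : A * EJ j = Q * R) (hR : IsUnit R.det)
    (hIQ : IsUnit ((EJ i)ᵀ * Q).det) :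
    IsUnit ((EJ i)ᵀ * A * EJ j).det ∧
      A - A * EJ j * ((EJ i)ᵀ * A * EJ j)⁻¹ * ((EJ i)ᵀ * A) =
        (1 - Q * ((EJ i)ᵀ * Q)⁻¹ * (EJ i)ᵀ) * A := by
  have key : (EJ i)ᵀ * A * EJ j = ((EJ i)ᵀ * Q) * R := by
    rw [Matrix.mul_assoc, hQR, Matrix.mul_assoc]
  have hdet : IsUnit ((EJ i)ᵀ * A * EJ j).det := by
    rw [key, Matrix.det_mul]
    exact hIQ.mul hR
  refine ⟨hdet, ?_⟩
  have hinv : ((EJ i)ᵀ * A * EJ j)⁻¹ = R⁻¹ * ((EJ i)ᵀ * Q)⁻¹ := by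
    rw [key, Matrix.mul_inv_rev]
  rw [hinv]
  have h1 : A * EJ j * (R⁻¹ * ((EJ i)ᵀ * Q)⁻¹) = Q * ((EJ i)ᵀ * Q)⁻¹ := by
    rw [hQR, ← Matrix.mul_assoc, Matrix.mul_assoc Q R R⁻¹,
      Matrix.mul_nonsing_inv R hR, Matrix.mul_one]
  rw [h1, Matrix.sub_mul, Matrix.one_mul]
  rw [Matrix.mul_assoc, Matrix.mul_assoc, Matrix.mul_assoc]
end
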